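/- arXiv:1902.01165 — 4 statements merged into one kernel-verified Lean document; each statement's English description precedes it below -/
import Mathlib

section
/- Let the general recurrent-IFS interpolation setup hold and assume the matchable conditions. Then there exists a unique continuous function f : I×J → ℝ such that f(x_i,y_j)=z_{ij} for all 0≤i≤N, 0≤j≤M, and f(u_i(x),v_j(y)) = F_{ij}(x,y,f(x,y)) for all (x,y)∈D'_{ij} and all 1≤i≤N, 1≤j≤M (equivalently, the graph pieces (Γf|_{D_{ij}}) form the invariant set of the recurrent IFS with maps W_{ij}(x,y,z)=(u_i(x),v_j(y),F_{ij}(x,y,z))). -/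
/-! On `D_{ij}` put `T g (x, y) = F_{ij}(u_i⁻¹ x, v_j⁻¹ y, g (u_i⁻¹ x, v_j⁻¹ y))`. By the matchable
conditions the branches agree where the cells meet, so `T` is well defined and maps continuous
functions on `I × J` to continuous ones; it contracts the sup distance by `max α_{ij} < 1`, and
its fixed points are exactly the solutions of the self-referential equation. Banach's theorem in
`C(I × J, ℝ)` gives existence and uniqueness. Interpolation is automatic: at a grid point the
equation and the corner conditions give `|f(x_k, y_l) - z_{kl}| ≤ α |f(x'_k, y'_l) - z'_{kl}|`,
and `(x'_k, y'_l)` is again a grid point, so the largest such error is zero. -/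

/- General recurrent-IFS interpolation setup (Liang–Ruan,
   "Construction and box dimension of recurrent fractal interpolation surfaces"). -/

noncomputable section
open Set

/-- Data of the general recurrent-IFS interpolation setup: grid points `x i`, `y j`
(for `i ≤ N`, `j ≤ M`), interpolation values `z i j`, index maps `px`, `py` selecting
the points `x' i = x (px i)`, `y' j = y (py j)`, the horizontal contractions `u i`, `v j`,
the maps `F i j`, and the contraction ratios `alpha i j`. -/
structure GenData where
  N : ℕ
  M : ℕ
  x : ℕ → ℝ
  y : ℕ → ℝ
  z : ℕ → ℕ → ℝ
  px : ℕ → ℕ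
  py : ℕ → ℕ
  u : ℕ → ℝ → ℝ
  v : ℕ → ℝ → ℝ
  F : ℕ → ℕ → ℝ → ℝ → ℝ → ℝ
  alpha : ℕ → ℕ → ℝ

namespace GenData

def x' (D : GenData) (i : ℕ) : ℝ := D.x (D.px i)
def y' (D : GenData) (j : ℕ) : ℝ := D.y (D.py j)
def I (D : GenData) : Set ℝ := Icc (D.x 0) (D.x D.N)
def J (D : GenData) : Set ℝ := Icc (D.y 0) (D.y D.M)
def Ii (D : GenData) (i : ℕ) : Set ℝ := Icc (D.x (i - 1)) (D.x i)
def Jj (D : GenData) (j : ℕ) : Set ℝ := Icc (D.y (j - 1)) (D.y j)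
def Dij (D : GenData) (i j : ℕ) : Set (ℝ × ℝ) := D.Ii i ×ˢ D.Jj j
def Ii' (D : GenData) (i : ℕ) : Set ℝ := uIcc (D.x' (i - 1)) (D.x' i)
def Jj' (D : GenData) (j : ℕ) : Set ℝ := uIcc (D.y' (j - 1)) (D.y' j)
def Dij' (D : GenData) (i j : ℕ) : Set (ℝ × ℝ) := D.Ii' i ×ˢ D.Jj' j
def z' (D : GenData) (i j : ℕ) : ℝ := D.z (D.px i) (D.py j)

/-- Hypotheses on the grid data: `N, M ≥ 2`, increasing grids, `x' i` chosen from the grid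
with `|x'_i - x'_{i-1}| > x_i - x_{i-1}`, and each `u i` (resp. `v j`) a contractive
homeomorphism from `I'_i` onto `I_i` (resp. `J'_j` onto `J_j`) with the endpoint conditions. -/
structure GridHyp (D : GenData) : Prop where
  hN : 2 ≤ D.N
  hM : 2 ≤ D.M
  hx : ∀ i < D.N, D.x i < D.x (i + 1)
  hy : ∀ j < D.M, D.y j < D.y (j + 1)
  hpx : ∀ i ≤ D.N, D.px i ≤ D.N
  hpy : ∀ j ≤ D.M, D.py j ≤ D.M
  hgapx : ∀ i, 1 ≤ i → i ≤ D.N → D.x i - D.x (i - 1) < |D.x' i - D.x' (i - 1)|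
  hgapy : ∀ j, 1 ≤ j → j ≤ D.M → D.y j - D.y (j - 1) < |D.y' j - D.y' (j - 1)|
  hu : ∀ i, 1 ≤ i → i ≤ D.N →
    (∃ c, 0 ≤ c ∧ c < 1 ∧ ∀ s ∈ D.Ii' i, ∀ t ∈ D.Ii' i, |D.u i s - D.u i t| ≤ c * |s - t|) ∧
    Set.BijOn (D.u i) (D.Ii' i) (D.Ii i) ∧
    D.u i (D.x' (i - 1)) = D.x (i - 1) ∧ D.u i (D.x' i) = D.x i
  hv : ∀ j, 1 ≤ j → j ≤ D.M →
    (∃ c, 0 ≤ c ∧ c < 1 ∧ ∀ s ∈ D.Jj' j, ∀ t ∈ D.Jj' j, |D.v j s - D.v j t| ≤ c * |s - t|) ∧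
    Set.BijOn (D.v j) (D.Jj' j) (D.Jj j) ∧
    D.v j (D.y' (j - 1)) = D.y (j - 1) ∧ D.v j (D.y' j) = D.y j

/-- Hypotheses on the maps `F i j`: continuity on `D'_{ij} × ℝ`, the interpolation
(corner) conditions, and the uniform contraction in the third variable. -/
structure FHyp (D : GenData) : Prop where
  hFcont : ∀ i j, 1 ≤ i → i ≤ D.N → 1 ≤ j → j ≤ D.M →
    ContinuousOn (fun p : (ℝ × ℝ) × ℝ => D.F i j p.1.1 p.1.2 p.2) (D.Dij' i j ×ˢ (univ : Set ℝ))
  hFval : ∀ i j, 1 ≤ i → i ≤ D.N → 1 ≤ j → j ≤ D.M →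
    ∀ k ∈ ({i - 1, i} : Set ℕ), ∀ l ∈ ({j - 1, j} : Set ℕ),
      D.F i j (D.x' k) (D.y' l) (D.z' k l) = D.z k l
  halpha : ∀ i j, 1 ≤ i → i ≤ D.N → 1 ≤ j → j ≤ D.M → 0 < D.alpha i j ∧ D.alpha i j < 1
  hFlip : ∀ i j, 1 ≤ i → i ≤ D.N → 1 ≤ j → j ≤ D.M →
    ∀ p ∈ D.Dij' i j, ∀ z1 z2 : ℝ,
      |D.F i j p.1 p.2 z1 - D.F i j p.1 p.2 z2| ≤ D.alpha i j * |z1 - z2|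

/-- The matchable conditions.  Here `x* = u_i⁻¹(x_i) = u_{i+1}⁻¹(x_i) = x'_i` and
`y* = v_j⁻¹(y_j) = v_{j+1}⁻¹(y_j) = y'_j` (since `u i (x' i) = u (i+1) (x' i) = x i`
and `u i`, `u (i+1)` are injective, and similarly for `v`). -/
def Matchable (D : GenData) : Prop :=
  (∀ i j, 1 ≤ i → i < D.N → 1 ≤ j → j ≤ D.M →
    ∀ t ∈ D.Jj' j, ∀ w : ℝ, D.F i j (D.x' i) t w = D.F (i + 1) j (D.x' i) t w) ∧
  (∀ i j, 1 ≤ i → i ≤ D.N → 1 ≤ j → j < D.M →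
    ∀ t ∈ D.Ii' i, ∀ w : ℝ, D.F i j t (D.y' j) w = D.F i (j + 1) t (D.y' j) w)

/-- `f` is a recurrent fractal interpolation function for the data: it is continuous on
`I × J`, interpolates the data, and satisfies the self-referential equation
`f (u_i x, v_j y) = F_{ij} (x, y, f (x, y))` on each `D'_{ij}` (equivalently, the pieces
of its graph form the invariant set of the recurrent IFS `{W_{ij}}`). -/
def IsRFIF (D : GenData) (f : ℝ × ℝ → ℝ) : Prop :=
  ContinuousOn f (D.I ×ˢ D.J) ∧
  (∀ i ≤ D.N, ∀ j ≤ D.M, f (D.x i, D.y j) = D.z i j) ∧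
  (∀ i j, 1 ≤ i → i ≤ D.N → 1 ≤ j → j ≤ D.M →
    ∀ p ∈ D.Dij' i j, f (D.u i p.1, D.v j p.2) = D.F i j p.1 p.2 (f p))

end GenData


open Function
open scoped NNReal

theorem Set.BijOn.continuousOn_invFunOn {X Y : Type*} [TopologicalSpace X] [TopologicalSpace Y]
    [T2Space Y] [Nonempty X] {f : X → Y} {s : Set X} {t : Set Y} (hbij : BijOn f s t)
    (hs : IsCompact s) (hf : ContinuousOn f s) : ContinuousOn (invFunOn f s) t := by
  refine continuousOn_iff_isClosed.2 fun C hC => ⟨f '' (C ∩ s), ?_, ?_⟩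
  · exact ((hs.inter_left hC).image_of_continuousOn (hf.mono inter_subset_right)).isClosed
  · ext y
    constructor
    · rintro ⟨hyC, hyt⟩
      exact ⟨⟨_, ⟨hyC, hbij.surjOn.mapsTo_invFunOn hyt⟩, hbij.surjOn.rightInvOn_invFunOn hyt⟩, hyt⟩
    · rintro ⟨⟨x, ⟨hxC, hxs⟩, rfl⟩, hyt⟩
      exact ⟨by rwa [mem_preimage, hbij.injOn.leftInvOn_invFunOn hxs], hyt⟩

theorem exists_unique_continuousOn_fixedPoint {X : Type*} [TopologicalSpace X] {K : Set X}
    (hK : IsCompact K) (T : (X → ℝ) → X → ℝ) {α : ℝ≥0} (hα : α < 1)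
    (hcont : ∀ g, ContinuousOn g K → ContinuousOn (T g) K)
    (hlip : ∀ g h d, (∀ p ∈ K, |g p - h p| ≤ d) → ∀ p ∈ K, |T g p - T h p| ≤ α * d) :
    ∃ f, ContinuousOn f K ∧ EqOn (T f) f K ∧
      ∀ g, ContinuousOn g K → EqOn (T g) g K → EqOn g f K := by
  classical
  have : CompactSpace K := isCompact_iff_compactSpace.mp hK
  let extend (g : C(K, ℝ)) (p : X) : ℝ := if hp : p ∈ K then g ⟨p, hp⟩ else 0
  have extend_of_mem (g : C(K, ℝ)) {p} (hp : p ∈ K) : extend g p = g ⟨p, hp⟩ := dif_pos hp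
  have continuousOn_extend (g : C(K, ℝ)) : ContinuousOn (extend g) K :=
    continuousOn_iff_continuous_domRestrict.2 <| by
      convert g.continuous using 1
      exact funext fun q => extend_of_mem g q.2
  let restr (g : X → ℝ) (hg : ContinuousOn g K) : C(K, ℝ) := ⟨K.domRestrict g, hg.domRestrict⟩
  let Φ (g : C(K, ℝ)) : C(K, ℝ) := restr (T (extend g)) (hcont _ (continuousOn_extend g))
  have hΦ : ContractingWith α Φ := by
    refine ⟨hα, LipschitzWith.of_dist_le_mul fun g h => ?_⟩
    refine (ContinuousMap.dist_le (by positivity)).2 fun q => ?_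
    refine hlip _ _ _ (fun p hp => ?_) q q.2
    rw [extend_of_mem g hp, extend_of_mem h hp, ← Real.dist_eq]
    exact ContinuousMap.dist_apply_le_dist _
  refine ⟨extend (ContractingWith.fixedPoint Φ hΦ), continuousOn_extend _, fun p hp => ?_,
    fun g hg hTg p hp => ?_⟩
  · rw [extend_of_mem _ hp]
    exact DFunLike.congr_fun hΦ.fixedPoint_isFixedPt ⟨p, hp⟩
  · have hfix : Φ (restr g hg) = restr g hg := by
      ext q
      have hT := hlip (extend (restr g hg)) g 0 (fun p hp => by simp [extend_of_mem _ hp, restr]) q q.2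
      rw [mul_zero, abs_nonpos_iff, sub_eq_zero] at hT
      exact hT.trans (hTg q.2)
    rw [extend_of_mem _ hp]
    exact DFunLike.congr_fun (hΦ.fixedPoint_unique hfix) ⟨p, hp⟩

theorem eq_zero_of_le_mul_comp {ι : Type*} {s : Set ι} (hs : s.Finite) {σ : ι → ι}
    (hσ : MapsTo σ s s) {e : ι → ℝ} (he0 : ∀ a ∈ s, 0 ≤ e a) {α : ℝ} (hα0 : 0 ≤ α)
    (hα1 : α < 1) (he : ∀ a ∈ s, e a ≤ α * e (σ a)) : ∀ a ∈ s, e a = 0 := by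
  intro a ha
  obtain ⟨b, hb, hmax⟩ := s.exists_max_image e hs ⟨a, ha⟩
  have hb0 : e b ≤ 0 := by
    nlinarith [he b hb, hmax _ (hσ hb), mul_le_mul_of_nonneg_left (hmax _ (hσ hb)) hα0]
  exact le_antisymm ((hmax a ha).trans hb0) (he0 a ha)

theorem exists_mem_Icc_pred_of_mem_Icc {α : Type*} [LinearOrder α] (x : ℕ → α) {n : ℕ}
    (hn : 1 ≤ n) {t : α} (ht : t ∈ Icc (x 0) (x n)) :
    ∃ i, 1 ≤ i ∧ i ≤ n ∧ t ∈ Icc (x (i - 1)) (x i) := by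
  induction n, hn using Nat.le_induction with
  | base => exact ⟨1, le_rfl, le_rfl, ht⟩
  | succ n hn ih =>
    by_cases htn : t ≤ x n
    · obtain ⟨i, hi, hin, hti⟩ := ih ⟨ht.1, htn⟩
      exact ⟨i, hi, hin.trans n.le_succ, hti⟩
    · exact ⟨n + 1, Nat.le_add_left 1 n, le_rfl, (not_le.1 htn).le, ht.2⟩

theorem continuousOn_of_abs_sub_le_mul {f : ℝ → ℝ} {S : Set ℝ} {c : ℝ} (hc : 0 ≤ c)
    (hf : ∀ s ∈ S, ∀ t ∈ S, |f s - f t| ≤ c * |s - t|) : ContinuousOn f S :=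
  (LipschitzOnWith.of_dist_le_mul (K := ⟨c, hc⟩) hf).continuousOn

structure GridAxis where
  N : ℕ
  x : ℕ → ℝ
  px : ℕ → ℕ
  u : ℕ → ℝ → ℝ

namespace GridAxis

variable (a : GridAxis)

def x' (i : ℕ) : ℝ := a.x (a.px i)
def I : Set ℝ := Icc (a.x 0) (a.x a.N)
def Ii (i : ℕ) : Set ℝ := Icc (a.x (i - 1)) (a.x i)
def Ii' (i : ℕ) : Set ℝ := uIcc (a.x' (i - 1)) (a.x' i)
def uinv (i : ℕ) : ℝ → ℝ := invFunOn (a.u i) (a.Ii' i)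

open Classical in
def piece (t : ℝ) : ℕ := if h : ∃ i, 1 ≤ i ∧ i ≤ a.N ∧ t ∈ a.Ii i then h.choose else 0

structure Hyp : Prop where
  one_le_N : 1 ≤ a.N
  x_lt_succ : ∀ i < a.N, a.x i < a.x (i + 1)
  px_le : ∀ i ≤ a.N, a.px i ≤ a.N
  continuousOn_u : ∀ i, 1 ≤ i → i ≤ a.N → ContinuousOn (a.u i) (a.Ii' i)
  bijOn_u : ∀ i, 1 ≤ i → i ≤ a.N → BijOn (a.u i) (a.Ii' i) (a.Ii i)
  u_left : ∀ i, 1 ≤ i → i ≤ a.N → a.u i (a.x' (i - 1)) = a.x (i - 1)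
  u_right : ∀ i, 1 ≤ i → i ≤ a.N → a.u i (a.x' i) = a.x i

namespace Hyp

variable {a} (h : a.Hyp) {i k : ℕ} {t : ℝ}
include h

theorem piece_spec (ht : t ∈ a.I) :
    1 ≤ a.piece t ∧ a.piece t ≤ a.N ∧ t ∈ a.Ii (a.piece t) := by
  have hex : ∃ i, 1 ≤ i ∧ i ≤ a.N ∧ t ∈ a.Ii i := exists_mem_Icc_pred_of_mem_Icc a.x h.one_le_N ht
  rw [piece, dif_pos hex]
  exact hex.choose_spec

theorem x_strictMonoOn : StrictMonoOn a.x (Iic a.N) :=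
  strictMonoOn_Iic_of_lt_succ fun m hm => h.x_lt_succ m hm

theorem x_le_x {l : ℕ} (hkl : k ≤ l) (hl : l ≤ a.N) : a.x k ≤ a.x l :=
  h.x_strictMonoOn.monotoneOn (show k ≤ a.N by omega) hl hkl

theorem x'_mem_I (hk : k ≤ a.N) : a.x' k ∈ a.I :=
  ⟨h.x_le_x (Nat.zero_le _) (h.px_le k hk), h.x_le_x (h.px_le k hk) le_rfl⟩

theorem Ii_subset_I (hi : i ≤ a.N) : a.Ii i ⊆ a.I :=
  Icc_subset_Icc (h.x_le_x (Nat.zero_le _) (by omega)) (h.x_le_x hi le_rfl)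

theorem Ii'_subset_I (hi : i ≤ a.N) : a.Ii' i ⊆ a.I :=
  uIcc_subset_Icc (h.x'_mem_I (i.sub_le 1 |>.trans hi)) (h.x'_mem_I hi)

section
variable (hi : 1 ≤ i) (hiN : i ≤ a.N)
include hi hiN

theorem uinv_mem (ht : t ∈ a.Ii i) : a.uinv i t ∈ a.Ii' i :=
  (h.bijOn_u i hi hiN).surjOn.mapsTo_invFunOn ht

theorem u_uinv (ht : t ∈ a.Ii i) : a.u i (a.uinv i t) = t :=
  (h.bijOn_u i hi hiN).surjOn.rightInvOn_invFunOn ht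

theorem uinv_u (ht : t ∈ a.Ii' i) : a.uinv i (a.u i t) = t :=
  (h.bijOn_u i hi hiN).injOn.leftInvOn_invFunOn ht

theorem uinv_x_left : a.uinv i (a.x (i - 1)) = a.x' (i - 1) := by
  rw [← h.u_left i hi hiN, h.uinv_u hi hiN left_mem_uIcc]

theorem uinv_x_right : a.uinv i (a.x i) = a.x' i := by
  rw [← h.u_right i hi hiN, h.uinv_u hi hiN right_mem_uIcc]

theorem continuousOn_uinv : ContinuousOn (a.uinv i) (a.Ii i) :=
  (h.bijOn_u i hi hiN).continuousOn_invFunOn isCompact_uIcc (h.continuousOn_u i hi hiN)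

end

theorem exists_u_x'_eq_x (hk : k ≤ a.N) :
    ∃ i, 1 ≤ i ∧ i ≤ a.N ∧ k ∈ ({i - 1, i} : Set ℕ) ∧
      a.x' k ∈ a.Ii' i ∧ a.u i (a.x' k) = a.x k := by
  rcases k.eq_zero_or_pos with rfl | hk0
  · exact ⟨1, le_rfl, h.one_le_N, by simp, left_mem_uIcc, h.u_left 1 le_rfl h.one_le_N⟩
  · exact ⟨k, hk0, hk, by simp, right_mem_uIcc, h.u_right k hk0 hk⟩

theorem eq_succ_of_mem_Ii_of_mem_Ii (hik : i < k) (hkN : k ≤ a.N) (hti : t ∈ a.Ii i)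
    (htk : t ∈ a.Ii k) : k = i + 1 ∧ t = a.x i := by
  have hk : k - 1 = i := by
    by_contra hne
    have := h.x_strictMonoOn (show i ∈ Iic a.N by simp; omega)
      (show k - 1 ∈ Iic a.N by simp; omega) (by omega)
    linarith [hti.2, htk.1]
  refine ⟨by omega, le_antisymm hti.2 ?_⟩
  simpa [hk] using htk.1

/-- Consecutive pieces meet only at `x i`, where `uinv i` and `uinv (i + 1)` both take the
value `x' i`. -/
theorem apply_uinv_eq_of_mem_Ii {β : Type*} (G : ℕ → ℝ → β)
    (hG : ∀ i, 1 ≤ i → i < a.N → G i (a.x' i) = G (i + 1) (a.x' i))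
    (hi : 1 ≤ i) (hiN : i ≤ a.N) (hk : 1 ≤ k) (hkN : k ≤ a.N)
    (hti : t ∈ a.Ii i) (htk : t ∈ a.Ii k) : G i (a.uinv i t) = G k (a.uinv k t) := by
  have adjacent : ∀ {i}, 1 ≤ i → i < a.N →
      G i (a.uinv i (a.x i)) = G (i + 1) (a.uinv (i + 1) (a.x i)) := fun {i} hi hiN => by
    have hleft := h.uinv_x_left (i := i + 1) (by omega) hiN
    rw [Nat.add_sub_cancel] at hleft
    rw [h.uinv_x_right hi hiN.le, hleft, hG i hi hiN]
  rcases lt_trichotomy i k with hik | rfl | hki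
  · obtain ⟨rfl, rfl⟩ := h.eq_succ_of_mem_Ii_of_mem_Ii hik hkN hti htk
    exact adjacent hi hkN
  · rfl
  · obtain ⟨rfl, rfl⟩ := h.eq_succ_of_mem_Ii_of_mem_Ii hki hiN htk hti
    exact (adjacent hk hiN).symm

end Hyp

end GridAxis

namespace GenData

variable {D : GenData}

abbrev xAxis (D : GenData) : GridAxis := ⟨D.N, D.x, D.px, D.u⟩
abbrev yAxis (D : GenData) : GridAxis := ⟨D.M, D.y, D.py, D.v⟩

theorem GridHyp.xAxis (h1 : D.GridHyp) : D.xAxis.Hyp where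
  one_le_N := one_le_two.trans h1.hN
  x_lt_succ := h1.hx
  px_le := h1.hpx
  continuousOn_u i hi hiN := by
    obtain ⟨c, hc, -, hu⟩ := (h1.hu i hi hiN).1
    exact continuousOn_of_abs_sub_le_mul hc hu
  bijOn_u i hi hiN := (h1.hu i hi hiN).2.1
  u_left i hi hiN := (h1.hu i hi hiN).2.2.1
  u_right i hi hiN := (h1.hu i hi hiN).2.2.2

theorem GridHyp.yAxis (h1 : D.GridHyp) : D.yAxis.Hyp where
  one_le_N := one_le_two.trans h1.hM
  x_lt_succ := h1.hy
  px_le := h1.hpy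
  continuousOn_u j hj hjM := by
    obtain ⟨c, hc, -, hv⟩ := (h1.hv j hj hjM).1
    exact continuousOn_of_abs_sub_le_mul hc hv
  bijOn_u j hj hjM := (h1.hv j hj hjM).2.1
  u_left j hj hjM := (h1.hv j hj hjM).2.2.1
  u_right j hj hjM := (h1.hv j hj hjM).2.2.2

def branch (D : GenData) (i j : ℕ) (g : ℝ × ℝ → ℝ) (p : ℝ × ℝ) : ℝ :=
  D.F i j (D.xAxis.uinv i p.1) (D.yAxis.uinv j p.2) (g (D.xAxis.uinv i p.1, D.yAxis.uinv j p.2))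

/-- On a point of several cells `D_{ij}` the choice of cell does not matter,
by `branch_eq_branch`. -/
def readBajraktarevic (D : GenData) (g : ℝ × ℝ → ℝ) (p : ℝ × ℝ) : ℝ :=
  D.branch (D.xAxis.piece p.1) (D.yAxis.piece p.2) g p

def IsSelfReferential (D : GenData) (f : ℝ × ℝ → ℝ) : Prop :=
  ∀ i j, 1 ≤ i → i ≤ D.N → 1 ≤ j → j ≤ D.M →
    ∀ p ∈ D.Dij' i j, f (D.u i p.1, D.v j p.2) = D.F i j p.1 p.2 (f p)

section
variable (h1 : D.GridHyp) {i j : ℕ} {p : ℝ × ℝ}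
include h1

theorem Dij'_subset (hiN : i ≤ D.N) (hjM : j ≤ D.M) : D.Dij' i j ⊆ D.I ×ˢ D.J :=
  prod_mono (h1.xAxis.Ii'_subset_I hiN) (h1.yAxis.Ii'_subset_I hjM)

theorem Dij_subset (hiN : i ≤ D.N) (hjM : j ≤ D.M) : D.Dij i j ⊆ D.I ×ˢ D.J :=
  prod_mono (h1.xAxis.Ii_subset_I hiN) (h1.yAxis.Ii_subset_I hjM)

theorem mem_Dij_piece (hp : p ∈ D.I ×ˢ D.J) :
    (1 ≤ D.xAxis.piece p.1 ∧ D.xAxis.piece p.1 ≤ D.N) ∧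
      (1 ≤ D.yAxis.piece p.2 ∧ D.yAxis.piece p.2 ≤ D.M) ∧
      p ∈ D.Dij (D.xAxis.piece p.1) (D.yAxis.piece p.2) := by
  obtain ⟨hi, hiN, hx⟩ := h1.xAxis.piece_spec hp.1
  obtain ⟨hj, hjM, hy⟩ := h1.yAxis.piece_spec hp.2
  exact ⟨⟨hi, hiN⟩, ⟨hj, hjM⟩, hx, hy⟩

section
variable (hi : 1 ≤ i) (hiN : i ≤ D.N) (hj : 1 ≤ j) (hjM : j ≤ D.M)
include hi hiN hj hjM

theorem uinv_mem_Dij' (hp : p ∈ D.Dij i j) :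
    (D.xAxis.uinv i p.1, D.yAxis.uinv j p.2) ∈ D.Dij' i j :=
  ⟨h1.xAxis.uinv_mem hi hiN hp.1, h1.yAxis.uinv_mem hj hjM hp.2⟩

theorem branch_eq_branch (hm : D.Matchable) {k l : ℕ} (hk : 1 ≤ k) (hkN : k ≤ D.N)
    (hl : 1 ≤ l) (hlM : l ≤ D.M) (g : ℝ × ℝ → ℝ) (hpij : p ∈ D.Dij i j) (hpkl : p ∈ D.Dij k l) :
    D.branch i j g p = D.branch k l g p := by
  obtain ⟨x, y⟩ := p
  have glue_x := h1.xAxis.apply_uinv_eq_of_mem_Ii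
    (fun i s => D.F i j s (D.yAxis.uinv j y) (g (s, D.yAxis.uinv j y)))
    (fun i hi hiN => hm.1 i j hi hiN hj hjM _ (h1.yAxis.uinv_mem hj hjM hpij.2) _)
    hi hiN hk hkN hpij.1 hpkl.1
  have glue_y := h1.yAxis.apply_uinv_eq_of_mem_Ii
    (fun j s => D.F k j (D.xAxis.uinv k x) s (g (D.xAxis.uinv k x, s)))
    (fun j hj hjM => hm.2 k j hk hkN hj hjM _ (h1.xAxis.uinv_mem hk hkN hpkl.1) _)
    hj hjM hl hlM hpij.2 hpkl.2
  exact glue_x.trans glue_y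

theorem readBajraktarevic_eq_branch (hm : D.Matchable) (g : ℝ × ℝ → ℝ) (hp : p ∈ D.Dij i j) :
    D.readBajraktarevic g p = D.branch i j g p :=
  have ⟨⟨hk, hkN⟩, ⟨hl, hlM⟩, hpkl⟩ := mem_Dij_piece h1 (Dij_subset h1 hiN hjM hp)
  branch_eq_branch h1 hk hkN hl hlM hm hi hiN hj hjM g hpkl hp

theorem continuousOn_branch (h2 : D.FHyp) {g : ℝ × ℝ → ℝ} (hg : ContinuousOn g (D.I ×ˢ D.J)) :
    ContinuousOn (D.branch i j g) (D.Dij i j) := by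
  have hinv : ContinuousOn (fun p : ℝ × ℝ => (D.xAxis.uinv i p.1, D.yAxis.uinv j p.2))
      (D.Dij i j) :=
    ((h1.xAxis.continuousOn_uinv hi hiN).comp continuousOn_fst fun _ hp => hp.1).prodMk
      ((h1.yAxis.continuousOn_uinv hj hjM).comp continuousOn_snd fun _ hp => hp.2)
  have hmaps : MapsTo (fun p : ℝ × ℝ => (D.xAxis.uinv i p.1, D.yAxis.uinv j p.2))
      (D.Dij i j) (D.Dij' i j) := fun _ hp => uinv_mem_Dij' h1 hi hiN hj hjM hp
  exact (h2.hFcont i j hi hiN hj hjM).comp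
    (hinv.prodMk (hg.comp hinv (hmaps.mono_right (Dij'_subset h1 hiN hjM))))
    fun _ hp => ⟨hmaps hp, mem_univ _⟩

end

theorem continuousOn_readBajraktarevic (h2 : D.FHyp) (hm : D.Matchable) {g : ℝ × ℝ → ℝ}
    (hg : ContinuousOn g (D.I ×ˢ D.J)) : ContinuousOn (D.readBajraktarevic g) (D.I ×ˢ D.J) := by
  let cell (q : Icc 1 D.N × Icc 1 D.M) : Set (ℝ × ℝ) := D.Dij q.1 q.2
  have hcover : D.I ×ˢ D.J ⊆ ⋃ q, cell q := fun p hp => by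
    obtain ⟨hi, hj, hpij⟩ := mem_Dij_piece h1 hp
    exact mem_iUnion.2 ⟨(⟨_, hi⟩, ⟨_, hj⟩), hpij⟩
  refine ((locallyFinite_of_finite cell).continuousOn_iUnion
    (fun _ => isClosed_Icc.prod isClosed_Icc) fun q => ?_).mono hcover
  obtain ⟨⟨i, hi, hiN⟩, ⟨j, hj, hjM⟩⟩ := q
  exact (continuousOn_branch h1 hi hiN hj hjM h2 hg).congr fun p hp =>
    readBajraktarevic_eq_branch h1 hi hiN hj hjM hm g hp

theorem abs_readBajraktarevic_sub_le (h2 : D.FHyp) {α : ℝ}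
    (hα : ∀ i j, 1 ≤ i → i ≤ D.N → 1 ≤ j → j ≤ D.M → D.alpha i j ≤ α)
    {g h : ℝ × ℝ → ℝ} {d : ℝ} (hd : ∀ q ∈ D.I ×ˢ D.J, |g q - h q| ≤ d) :
    ∀ p ∈ D.I ×ˢ D.J, |D.readBajraktarevic g p - D.readBajraktarevic h p| ≤ α * d := by
  intro p hp
  obtain ⟨⟨hi, hiN⟩, ⟨hj, hjM⟩, hpij⟩ := mem_Dij_piece h1 hp
  have hq := uinv_mem_Dij' h1 hi hiN hj hjM hpij
  have hd0 : 0 ≤ d := (abs_nonneg _).trans (hd p hp)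
  calc |D.readBajraktarevic g p - D.readBajraktarevic h p|
      ≤ D.alpha _ _ * |g _ - h _| := h2.hFlip _ _ hi hiN hj hjM _ hq _ _
    _ ≤ D.alpha _ _ * d :=
        mul_le_mul_of_nonneg_left (hd _ (Dij'_subset h1 hiN hjM hq))
          (h2.halpha _ _ hi hiN hj hjM).1.le
    _ ≤ α * d := mul_le_mul_of_nonneg_right (hα _ _ hi hiN hj hjM) hd0

theorem isSelfReferential_iff_eqOn (hm : D.Matchable) {g : ℝ × ℝ → ℝ} :
    D.IsSelfReferential g ↔ EqOn (D.readBajraktarevic g) g (D.I ×ˢ D.J) := by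
  constructor
  · intro hg p hp
    obtain ⟨⟨hi, hiN⟩, ⟨hj, hjM⟩, hpij⟩ := mem_Dij_piece h1 hp
    have hx : D.u _ (D.xAxis.uinv _ p.1) = p.1 := h1.xAxis.u_uinv hi hiN hpij.1
    have hy : D.v _ (D.yAxis.uinv _ p.2) = p.2 := h1.yAxis.u_uinv hj hjM hpij.2
    have hself := hg _ _ hi hiN hj hjM _ (uinv_mem_Dij' h1 hi hiN hj hjM hpij)
    dsimp only at hself
    rw [hx, hy] at hself
    exact hself.symm
  · intro hg i j hi hiN hj hjM p hp
    have hWp : (D.u i p.1, D.v j p.2) ∈ D.Dij i j :=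
      ⟨(h1.xAxis.bijOn_u i hi hiN).mapsTo hp.1, (h1.yAxis.bijOn_u j hj hjM).mapsTo hp.2⟩
    rw [← hg (Dij_subset h1 hiN hjM hWp), readBajraktarevic_eq_branch h1 hi hiN hj hjM hm g hWp,
      branch, h1.xAxis.uinv_u hi hiN hp.1, h1.yAxis.uinv_u hj hjM hp.2]

end

theorem FHyp.exists_alpha_le (h2 : D.FHyp) :
    ∃ α : ℝ≥0, α < 1 ∧ ∀ i j, 1 ≤ i → i ≤ D.N → 1 ≤ j → j ≤ D.M → D.alpha i j ≤ α := by
  let s := Finset.Icc 1 D.N ×ˢ Finset.Icc 1 D.M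
  let ratio (q : ℕ × ℕ) : ℝ≥0 := (D.alpha q.1 q.2).toNNReal
  refine ⟨s.sup ratio, (Finset.sup_lt_iff one_pos).2 fun q hq => ?_, fun i j hi hiN hj hjM => ?_⟩
  · simp only [s, Finset.mem_product, Finset.mem_Icc] at hq
    exact Real.toNNReal_lt_one.2 (h2.halpha _ _ hq.1.1 hq.1.2 hq.2.1 hq.2.2).2
  · have hij : (i, j) ∈ s := by simp [s, hi, hiN, hj, hjM]
    exact (Real.le_coe_toNNReal _).trans (NNReal.coe_le_coe.2 (Finset.le_sup (f := ratio) hij))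

theorem interpolates_of_isSelfReferential (h1 : D.GridHyp) (h2 : D.FHyp) {f : ℝ × ℝ → ℝ}
    (hf : D.IsSelfReferential f) : ∀ k ≤ D.N, ∀ l ≤ D.M, f (D.x k, D.y l) = D.z k l := by
  obtain ⟨α, hα1, hα⟩ := h2.exists_alpha_le
  let e (q : ℕ × ℕ) : ℝ := |f (D.x q.1, D.y q.2) - D.z q.1 q.2|
  have hcontract : ∀ q ∈ Iic D.N ×ˢ Iic D.M, e q ≤ α * e (D.px q.1, D.py q.2) := by
    rintro ⟨k, l⟩ ⟨hk, hl⟩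
    obtain ⟨i, hi, hiN, hki, hx'i, hu⟩ := h1.xAxis.exists_u_x'_eq_x hk
    obtain ⟨j, hj, hjM, hlj, hy'j, hv⟩ := h1.yAxis.exists_u_x'_eq_x hl
    have hself : f (D.x k, D.y l) = D.F i j (D.x' k) (D.y' l) (f (D.x' k, D.y' l)) := by
      rw [← hf i j hi hiN hj hjM (D.x' k, D.y' l) ⟨hx'i, hy'j⟩]
      exact congrArg f (Prod.ext hu.symm hv.symm)
    calc e (k, l)
        = |D.F i j (D.x' k) (D.y' l) (f (D.x' k, D.y' l)) -
            D.F i j (D.x' k) (D.y' l) (D.z' k l)| := by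
          rw [h2.hFval i j hi hiN hj hjM k hki l hlj, ← hself]
      _ ≤ D.alpha i j * e (D.px k, D.py l) :=
          h2.hFlip i j hi hiN hj hjM (D.x' k, D.y' l) ⟨hx'i, hy'j⟩ _ _
      _ ≤ α * e (D.px k, D.py l) :=
          mul_le_mul_of_nonneg_right (hα i j hi hiN hj hjM) (abs_nonneg _)
  have he := eq_zero_of_le_mul_comp ((finite_Iic _).prod (finite_Iic _))
    (σ := fun q => (D.px q.1, D.py q.2)) (fun q hq => ⟨h1.hpx _ hq.1, h1.hpy _ hq.2⟩)
    (fun _ _ => abs_nonneg _) α.2 (by exact_mod_cast hα1) hcontract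
  exact fun k hk l hl => sub_eq_zero.1 (abs_eq_zero.1 (he (k, l) ⟨hk, hl⟩))

end GenData

open GenData in
/-- **Theorem 2.1.** Under the general recurrent-IFS interpolation setup with the matchable
conditions, there is a unique continuous function `f` on `I × J` interpolating the data
such that `f (u_i x, v_j y) = F_{ij}(x, y, f(x,y))` on each `D'_{ij}`; i.e. the graph
pieces `(Γ f|_{D_{ij}})` form the invariant set of the recurrent IFS. -/
theorem exists_unique_RFIF (D : GenData) (h1 : D.GridHyp) (h2 : D.FHyp) (hm : D.Matchable) :
    ∃ f : ℝ × ℝ → ℝ, D.IsRFIF f ∧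
      ∀ g : ℝ × ℝ → ℝ, D.IsRFIF g → Set.EqOn g f (D.I ×ˢ D.J) := by
  obtain ⟨α, hα1, hα⟩ := h2.exists_alpha_le
  obtain ⟨f, hf, hfix, huniq⟩ := exists_unique_continuousOn_fixedPoint
    (isCompact_Icc.prod isCompact_Icc) D.readBajraktarevic hα1
    (fun _ => continuousOn_readBajraktarevic h1 h2 hm)
    (fun _ _ _ => abs_readBajraktarevic_sub_le h1 h2 hα)
  have hself : D.IsSelfReferential f := (isSelfReferential_iff_eqOn h1 hm).2 hfix
  exact ⟨f, ⟨hf, interpolates_of_isSelfReferential h1 h2 hself, hself⟩,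
    fun g hg => huniq g hg.1 ((isSelfReferential_iff_eqOn h1 hm).1 hg.2.2)⟩
end
end

section
/- Let the general recurrent-IFS interpolation setup hold with the matchable conditions, let f be the recurrent fractal interpolation function (the unique continuous f with f(x_i,y_j)=z_{ij} and f(u_i(x),v_j(y))=F_{ij}(x,y,f(x,y)) on each D'_{ij}), and set W_{ij}(x,y,z)=(u_i(x),v_j(y),F_{ij}(x,y,z)). For a tuple A=(A_{ij}) of nonempty compact subsets A_{ij}⊆D_{ij}×ℝ define (W(A))_{ij} = ∪{W_{ij}(A_{kℓ}) : D_{kℓ}⊆D'_{ij}}. Then for every such tuple A with all A_{ij} nonempty, lim_{n→∞} max_{i,j} d_H((Wⁿ(A))_{ij}, Γf|_{D_{ij}}) = 0, where d_H is the Hausdorff metric on compact subsets of ℝ³ and Γf|_{D_{ij}}={(x,y,f(x,y)) : (x,y)∈D_{ij}}. -/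
/- General recurrent-IFS interpolation setup (Liang–Ruan,
   "Construction and box dimension of recurrent fractal interpolation surfaces"). -/

noncomputable section
open Set

namespace GenData

/-- The map `W_{ij}(x,y,z) = (u_i x, v_j y, F_{ij}(x,y,z))` of the recurrent IFS. -/
def Wmap (D : GenData) (i j : ℕ) (p : ℝ × ℝ × ℝ) : ℝ × ℝ × ℝ :=
  (D.u i p.1, D.v j p.2.1, D.F i j p.1 p.2.1 p.2.2)

/-- Action of the recurrent IFS on tuples of sets:
`(W A)_{ij} = ⋃ { W_{ij}(A_{kl}) : D_{kl} ⊆ D'_{ij} }`. -/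
def Wact (D : GenData) (A : ℕ → ℕ → Set (ℝ × ℝ × ℝ)) : ℕ → ℕ → Set (ℝ × ℝ × ℝ) :=
  fun i j =>
    ⋃ (k : ℕ) (l : ℕ)
      (_ : 1 ≤ k ∧ k ≤ D.N ∧ 1 ≤ l ∧ l ≤ D.M ∧ D.Dij k l ⊆ D.Dij' i j),
      D.Wmap i j '' A k l

/-- The graph of `f` restricted to `E`. -/
def graphOn (f : ℝ × ℝ → ℝ) (E : Set (ℝ × ℝ)) : Set (ℝ × ℝ × ℝ) :=
  (fun p : ℝ × ℝ => (p.1, p.2, f p)) '' E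

end GenData


private lemma RFIFaux.mono (x : ℕ → ℝ) (N : ℕ) (hx : ∀ i < N, x i < x (i+1)) :
    ∀ a b : ℕ, a ≤ b → b ≤ N → x a ≤ x b := by
  intro a b hab hbN
  induction b with
  | zero => simp_all
  | succ b ih =>
    rcases Nat.eq_or_lt_of_le hab with h | h
    · rw [h]
    · have h1 : a ≤ b := by omega
      have h2 : b ≤ N := by omega
      exact (ih h1 h2).trans (le_of_lt (hx b (by omega)))

private lemma RFIFaux.cell_cover (x : ℕ → ℝ) (a : ℕ) :
    ∀ b, a < b → ∀ t : ℝ, x a ≤ t → t ≤ x b →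
      ∃ k, a < k ∧ k ≤ b ∧ x (k-1) ≤ t ∧ t ≤ x k := by
  intro b
  induction b with
  | zero => omega
  | succ b ih =>
    intro hab t h1 h2
    by_cases hb : a < b
    · by_cases hle : t ≤ x b
      · obtain ⟨k, hk1, hk2, hk3, hk4⟩ := ih hb t h1 hle
        exact ⟨k, hk1, by omega, hk3, hk4⟩
      · exact ⟨b+1, by omega, le_refl _, by simpa using le_of_not_ge hle, h2⟩
    · have : a = b := by omega
      subst this
      exact ⟨a+1, by omega, le_refl _, by simpa using h1, h2⟩

/-- decomposition of a "long" interval into grid cells -/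
private lemma RFIFaux.dir_decomp (x : ℕ → ℝ) (N : ℕ) (hx : ∀ i < N, x i < x (i+1))
    (p q : ℕ) (hp : p ≤ N) (hq : q ≤ N) (hpq : x p ≠ x q)
    (a' : ℝ) (ha' : a' ∈ uIcc (x p) (x q)) :
    ∃ k, 1 ≤ k ∧ k ≤ N ∧ a' ∈ Icc (x (k-1)) (x k) ∧
      Icc (x (k-1)) (x k) ⊆ uIcc (x p) (x q)  := by
  have hmono := RFIFaux.mono x N hx
  -- wlog on min/max
  rcases le_total p q with hle | hle
  · have hlt : p < q := by
      rcases Nat.eq_or_lt_of_le hle with h | h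
      · exact absurd (by rw [h]) hpq
      · exact h
    have hxle : x p ≤ x q := hmono p q hle hq
    have huIcc : uIcc (x p) (x q) = Icc (x p) (x q) := uIcc_of_le hxle
    rw [huIcc] at ha' ⊢
    obtain ⟨k, hk1, hk2, hk3, hk4⟩ := RFIFaux.cell_cover x p q hlt a' ha'.1 ha'.2
    refine ⟨k, by omega, by omega, ⟨hk3, hk4⟩, fun t ht => ⟨?_, ?_⟩⟩
    · exact le_trans (hmono p (k-1) (by omega) (by omega)) ht.1
    · exact le_trans ht.2 (hmono k q hk2 hq)
  · have hlt : q < p := by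
      rcases Nat.eq_or_lt_of_le hle with h | h
      · exact absurd (by rw [h]) hpq
      · exact h
    have hxle : x q ≤ x p := hmono q p hle hp
    have huIcc : uIcc (x p) (x q) = Icc (x q) (x p) := uIcc_of_ge hxle
    rw [huIcc] at ha' ⊢
    obtain ⟨k, hk1, hk2, hk3, hk4⟩ := RFIFaux.cell_cover x q p hlt a' ha'.1 ha'.2
    refine ⟨k, by omega, by omega, ⟨hk3, hk4⟩, fun t ht => ⟨?_, ?_⟩⟩
    · exact le_trans (hmono q (k-1) (by omega) (by omega)) ht.1
    · exact le_trans ht.2 (hmono k p hk2 hp)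

private lemma RFIFaux.bound1 (g : ℕ → ℝ) (n : ℕ) :
    ∃ c, 0 ≤ c ∧ (∀ i ≤ n, g i ≤ c) ∧ ((∀ i ≤ n, 0 ≤ g i ∧ g i < 1) → c < 1) := by
  induction n with
  | zero =>
    refine ⟨max (g 0) 0, le_max_right _ _, ?_, ?_⟩
    · intro i hi; interval_cases i; exact le_max_left _ _
    · intro h
      exact max_lt ((h 0 le_rfl).2) one_pos
  | succ n ih =>
    obtain ⟨c, hc0, hcb, hc1⟩ := ih
    refine ⟨max c (max (g (n+1)) 0), le_trans hc0 (le_max_left _ _), ?_, ?_⟩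
    · intro i hi
      rcases Nat.lt_or_ge i (n+1) with h | h
      · exact le_trans (hcb i (by omega)) (le_max_left _ _)
      · have : i = n + 1 := by omega
        rw [this]
        exact le_trans (le_max_left _ _) (le_max_right _ _)
    · intro h
      exact max_lt (hc1 fun i hi => h i (by omega))
        (max_lt (h (n+1) le_rfl).2 one_pos)

private lemma RFIFaux.bound2 (g : ℕ → ℕ → ℝ) (n m : ℕ) :
    ∃ c, 0 ≤ c ∧ (∀ i ≤ n, ∀ j ≤ m, g i j ≤ c) ∧
      ((∀ i ≤ n, ∀ j ≤ m, 0 ≤ g i j ∧ g i j < 1) → c < 1) := by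
  induction n with
  | zero =>
    obtain ⟨c, hc0, hcb, hc1⟩ := RFIFaux.bound1 (g 0) m
    refine ⟨c, hc0, ?_, ?_⟩
    · intro i hi j hj; interval_cases i; exact hcb j hj
    · intro h; exact hc1 fun j hj => h 0 le_rfl j hj
  | succ n ih =>
    obtain ⟨c, hc0, hcb, hc1⟩ := ih
    obtain ⟨c', hc0', hcb', hc1'⟩ := RFIFaux.bound1 (g (n+1)) m
    refine ⟨max c c', le_trans hc0 (le_max_left _ _), ?_, ?_⟩
    · intro i hi j hj
      rcases Nat.lt_or_ge i (n+1) with h | h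
      · exact le_trans (hcb i (by omega) j hj) (le_max_left _ _)
      · have : i = n + 1 := by omega
        rw [this]
        exact le_trans (hcb' j hj) (le_max_right _ _)
    · intro h
      exact max_lt (hc1 fun i hi j hj => h i (by omega) j hj)
        (hc1' fun j hj => h (n+1) le_rfl j hj)
open GenData in
/-- **Theorem 2.2.**  Let `f` be the RFIF.  For every tuple `A = (A_{ij})` of nonempty
compact subsets `A_{ij} ⊆ D_{ij} × ℝ`, the iterates `Wⁿ(A)` converge to the tuple of graph
pieces `(Γ f|_{D_{ij}})` in the (maximum of the) Hausdorff metric, i.e. for all `i, j`,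
`d_H((Wⁿ A)_{ij}, Γ f|_{D_{ij}}) → 0` as `n → ∞`. -/
theorem Wact_iterates_tendsto_graph (D : GenData) (h1 : D.GridHyp) (h2 : D.FHyp)
    (hm : D.Matchable) (f : ℝ × ℝ → ℝ) (hf : D.IsRFIF f)
    (A : ℕ → ℕ → Set (ℝ × ℝ × ℝ))
    (hA : ∀ i j, 1 ≤ i → i ≤ D.N → 1 ≤ j → j ≤ D.M →
      (A i j).Nonempty ∧ IsCompact (A i j) ∧ A i j ⊆ {p : ℝ × ℝ × ℝ | (p.1, p.2.1) ∈ D.Dij i j}) :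
    ∀ i j, 1 ≤ i → i ≤ D.N → 1 ≤ j → j ≤ D.M →
      Filter.Tendsto
        (fun n : ℕ => Metric.hausdorffDist ((D.Wact)^[n] A i j) (graphOn f (D.Dij i j)))
        Filter.atTop (nhds 0) := by
  -- basic facts
  obtain ⟨hfc, hfval, hfeq⟩ := hf
  have hmx := RFIFaux.mono D.x D.N h1.hx
  have hmy := RFIFaux.mono D.y D.M h1.hy
  have hDmem : ∀ i j (ab : ℝ × ℝ), ab ∈ D.Dij i j ↔
      (D.x (i-1) ≤ ab.1 ∧ ab.1 ≤ D.x i) ∧ (D.y (j-1) ≤ ab.2 ∧ ab.2 ≤ D.y j) := by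
    intro i j ab
    simp only [GenData.Dij, GenData.Ii, GenData.Jj, Set.mem_prod, Set.mem_Icc]
  have hD'mem : ∀ i j (ab : ℝ × ℝ), ab ∈ D.Dij' i j ↔
      ab.1 ∈ uIcc (D.x' (i-1)) (D.x' i) ∧ ab.2 ∈ uIcc (D.y' (j-1)) (D.y' j) := by
    intro i j ab
    simp only [GenData.Dij', GenData.Ii', GenData.Jj', Set.mem_prod]
  have hDijIJ : ∀ i j, 1 ≤ i → i ≤ D.N → 1 ≤ j → j ≤ D.M →
      ∀ ab : ℝ × ℝ, ab ∈ D.Dij i j → ab ∈ D.I ×ˢ D.J := by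
    intro i j hi1 hiN hj1 hjM ab hab
    rw [hDmem] at hab
    refine ⟨⟨?_, ?_⟩, ⟨?_, ?_⟩⟩
    · exact le_trans (hmx 0 (i-1) (by omega) (by omega)) hab.1.1
    · exact le_trans hab.1.2 (hmx i D.N hiN le_rfl)
    · exact le_trans (hmy 0 (j-1) (by omega) (by omega)) hab.2.1
    · exact le_trans hab.2.2 (hmy j D.M hjM le_rfl)
  -- uniform contraction constant for u and v
  have hcu' : ∀ i : ℕ, ∃ c, 0 ≤ c ∧ c < 1 ∧ (1 ≤ i → i ≤ D.N →
      ∀ s ∈ D.Ii' i, ∀ t ∈ D.Ii' i, |D.u i s - D.u i t| ≤ c * |s - t|) := by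
    intro i
    by_cases h : 1 ≤ i ∧ i ≤ D.N
    · obtain ⟨c, h0, h1', hL⟩ := (h1.hu i h.1 h.2).1
      exact ⟨c, h0, h1', fun _ _ => hL⟩
    · exact ⟨0, le_rfl, one_pos, fun hi hi2 => absurd ⟨hi, hi2⟩ h⟩
  choose cu hcu0 hcu1 hcuL using hcu'
  have hcv' : ∀ j : ℕ, ∃ c, 0 ≤ c ∧ c < 1 ∧ (1 ≤ j → j ≤ D.M →
      ∀ s ∈ D.Jj' j, ∀ t ∈ D.Jj' j, |D.v j s - D.v j t| ≤ c * |s - t|) := by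
    intro j
    by_cases h : 1 ≤ j ∧ j ≤ D.M
    · obtain ⟨c, h0, h1', hL⟩ := (h1.hv j h.1 h.2).1
      exact ⟨c, h0, h1', fun _ _ => hL⟩
    · exact ⟨0, le_rfl, one_pos, fun hj hj2 => absurd ⟨hj, hj2⟩ h⟩
  choose cv hcv0 hcv1 hcvL using hcv'
  obtain ⟨c1, hc10, hc1b, hc11'⟩ := RFIFaux.bound1 cu D.N
  obtain ⟨c2, hc20, hc2b, hc21'⟩ := RFIFaux.bound1 cv D.M
  set c : ℝ := max c1 c2 with hcdef
  have hc0 : 0 ≤ c := le_trans hc10 (le_max_left _ _)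
  have hc1 : c < 1 := max_lt (hc11' fun i _ => ⟨hcu0 i, hcu1 i⟩)
    (hc21' fun j _ => ⟨hcv0 j, hcv1 j⟩)
  have hcu : ∀ i, 1 ≤ i → i ≤ D.N →
      ∀ s ∈ D.Ii' i, ∀ t ∈ D.Ii' i, |D.u i s - D.u i t| ≤ c * |s - t| := by
    intro i hi1 hiN s hs t ht
    refine le_trans (hcuL i hi1 hiN s hs t ht) (mul_le_mul_of_nonneg_right ?_ (abs_nonneg _))
    exact le_trans (hc1b i hiN) (le_max_left _ _)
  have hcv : ∀ j, 1 ≤ j → j ≤ D.M →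
      ∀ s ∈ D.Jj' j, ∀ t ∈ D.Jj' j, |D.v j s - D.v j t| ≤ c * |s - t| := by
    intro j hj1 hjM s hs t ht
    refine le_trans (hcvL j hj1 hjM s hs t ht) (mul_le_mul_of_nonneg_right ?_ (abs_nonneg _))
    exact le_trans (hc2b j hjM) (le_max_right _ _)
  -- uniform alpha bound
  have hal' : ∀ i j : ℕ, ∃ a, (0 ≤ a ∧ a < 1) ∧ (1 ≤ i → i ≤ D.N → 1 ≤ j → j ≤ D.M →
      D.alpha i j ≤ a) := by
    intro i j
    by_cases h : 1 ≤ i ∧ i ≤ D.N ∧ 1 ≤ j ∧ j ≤ D.M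
    · obtain ⟨ha0, ha1⟩ := h2.halpha i j h.1 h.2.1 h.2.2.1 h.2.2.2
      exact ⟨D.alpha i j, ⟨le_of_lt ha0, ha1⟩, fun _ _ _ _ => le_rfl⟩
    · exact ⟨0, ⟨le_rfl, one_pos⟩, fun a b c d => absurd ⟨a, b, c, d⟩ h⟩
  choose al hal01 halb using hal'
  obtain ⟨abar, habar0, habarb, habar1'⟩ := RFIFaux.bound2 al D.N D.M
  have habar1 : abar < 1 := habar1' fun i _ j _ => hal01 i j
  have halpha_le : ∀ i j, 1 ≤ i → i ≤ D.N → 1 ≤ j → j ≤ D.M → D.alpha i j ≤ abar :=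
    fun i j a b c' d => le_trans (halb i j a b c' d) (habarb i b j d)
  -- compactness of I × J and bound E0 on initial vertical deviation
  have hIJcomp : IsCompact (D.I ×ˢ D.J) := by
    exact (isCompact_Icc).prod isCompact_Icc
  have hE' : ∀ i j : ℕ, ∃ E, 0 ≤ E ∧ (1 ≤ i → i ≤ D.N → 1 ≤ j → j ≤ D.M →
      ∀ p ∈ A i j, |p.2.2 - f (p.1, p.2.1)| ≤ E) := by
    intro i j
    by_cases h : 1 ≤ i ∧ i ≤ D.N ∧ 1 ≤ j ∧ j ≤ D.M
    · obtain ⟨hne, hcomp, hsub⟩ := hA i j h.1 h.2.1 h.2.2.1 h.2.2.2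
      have hcont : ContinuousOn (fun p : ℝ × ℝ × ℝ => p.2.2 - f (p.1, p.2.1)) (A i j) := by
        apply ContinuousOn.sub
        · exact (continuous_snd.comp continuous_snd).continuousOn
        · apply hfc.comp (Continuous.continuousOn (continuous_fst.prodMk (continuous_fst.comp continuous_snd)))
          intro p hp
          exact hDijIJ i j h.1 h.2.1 h.2.2.1 h.2.2.2 _ (hsub hp)
      obtain ⟨C, hC⟩ := hcomp.exists_bound_of_continuousOn hcont
      refine ⟨max C 0, le_max_right _ _, fun _ _ _ _ p hp => ?_⟩
      exact le_trans (by simpa [Real.norm_eq_abs] using hC p hp) (le_max_left _ _)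
    · exact ⟨0, le_rfl, fun a b c' d => absurd ⟨a, b, c', d⟩ h⟩
  choose E hEnn hEb using hE'
  obtain ⟨E0, hE00, hE0b, -⟩ := RFIFaux.bound2 E D.N D.M
  have hE0 : ∀ i j, 1 ≤ i → i ≤ D.N → 1 ≤ j → j ≤ D.M →
      ∀ p ∈ A i j, |p.2.2 - f (p.1, p.2.1)| ≤ E0 :=
    fun i j a b c' d p hp => le_trans (hEb i j a b c' d p hp) (hE0b i b j d)
  -- horizontal diameter bound
  set H : ℝ := max (D.x D.N - D.x 0) (D.y D.M - D.y 0) with hHdef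
  have hH0 : 0 ≤ H := le_trans (by linarith [hmx 0 D.N (Nat.zero_le _) le_rfl]) (le_max_left _ _)
  -- surjective decomposition of each Dij through the maps (u i, v j)
  have hdecomp : ∀ i j, 1 ≤ i → i ≤ D.N → 1 ≤ j → j ≤ D.M → ∀ ab : ℝ × ℝ, ab ∈ D.Dij i j →
      ∃ k l, (1 ≤ k ∧ k ≤ D.N ∧ 1 ≤ l ∧ l ≤ D.M ∧ D.Dij k l ⊆ D.Dij' i j) ∧
        ∃ a'b' : ℝ × ℝ, a'b' ∈ D.Dij k l ∧ D.u i a'b'.1 = ab.1 ∧ D.v j a'b'.2 = ab.2 := by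
    intro i j hi1 hiN hj1 hjM ab hab
    obtain ⟨-, hubij, -, -⟩ := h1.hu i hi1 hiN
    obtain ⟨-, hvbij, -, -⟩ := h1.hv j hj1 hjM
    obtain ⟨a', ha'mem, ha'⟩ := hubij.surjOn hab.1
    obtain ⟨b', hb'mem, hb'⟩ := hvbij.surjOn hab.2
    have hxne : D.x (D.px (i-1)) ≠ D.x (D.px i) := by
      have hlt : D.x (i-1) < D.x i := by
        have h' := h1.hx (i-1) (by omega)
        have e : i - 1 + 1 = i := by omega
        rwa [e] at h'
      have hgap := h1.hgapx i hi1 hiN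
      intro he
      have hz : D.x' i - D.x' (i-1) = 0 := by
        simp only [GenData.x']
        rw [he]; ring
      rw [hz, abs_zero] at hgap
      linarith
    have hyne : D.y (D.py (j-1)) ≠ D.y (D.py j) := by
      have hlt : D.y (j-1) < D.y j := by
        have h' := h1.hy (j-1) (by omega)
        have e : j - 1 + 1 = j := by omega
        rwa [e] at h'
      have hgap := h1.hgapy j hj1 hjM
      intro he
      have hz : D.y' j - D.y' (j-1) = 0 := by
        simp only [GenData.y']
        rw [he]; ring
      rw [hz, abs_zero] at hgap
      linarith
    obtain ⟨k, hk1, hkN, hkmem, hksub⟩ := RFIFaux.dir_decomp D.x D.N h1.hx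
      (D.px (i-1)) (D.px i) (h1.hpx (i-1) (by omega)) (h1.hpx i hiN) hxne a' ha'mem
    obtain ⟨l, hl1, hlM, hlmem, hlsub⟩ := RFIFaux.dir_decomp D.y D.M h1.hy
      (D.py (j-1)) (D.py j) (h1.hpy (j-1) (by omega)) (h1.hpy j hjM) hyne b' hb'mem
    refine ⟨k, l, ⟨hk1, hkN, hl1, hlM, fun t ht => ⟨hksub ht.1, hlsub ht.2⟩⟩,
      (a', b'), ⟨hkmem, hlmem⟩, ha', hb'⟩
  -- the key induction: horizontal covering and vertical contraction
  have key : ∀ n : ℕ, ∀ i j, 1 ≤ i → i ≤ D.N → 1 ≤ j → j ≤ D.M →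
      (∀ p ∈ (D.Wact)^[n] A i j, (p.1, p.2.1) ∈ D.Dij i j ∧
        |p.2.2 - f (p.1, p.2.1)| ≤ abar ^ n * E0) ∧
      (∀ ab : ℝ × ℝ, ab ∈ D.Dij i j → ∃ p ∈ (D.Wact)^[n] A i j,
        |ab.1 - p.1| ≤ c ^ n * H ∧ |ab.2 - p.2.1| ≤ c ^ n * H) := by
    intro n
    induction n with
    | zero =>
      intro i j hi1 hiN hj1 hjM
      simp only [Function.iterate_zero, id_eq, pow_zero, one_mul]
      obtain ⟨hne, hcomp, hsub⟩ := hA i j hi1 hiN hj1 hjM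
      constructor
      · intro p hp
        exact ⟨hsub hp, hE0 i j hi1 hiN hj1 hjM p hp⟩
      · intro ab hab
        obtain ⟨p, hp⟩ := hne
        have hD1 := (hDmem i j ab).1 hab
        have hD2 := (hDmem i j (p.1, p.2.1)).1 (hsub hp)
        have hxH : D.x D.N - D.x 0 ≤ H := le_max_left _ _
        have hyH : D.y D.M - D.y 0 ≤ H := le_max_right _ _
        have hx0 : D.x 0 ≤ D.x (i-1) := hmx 0 (i-1) (by omega) (by omega)
        have hxN : D.x i ≤ D.x D.N := hmx i D.N hiN le_rfl
        have hy0 : D.y 0 ≤ D.y (j-1) := hmy 0 (j-1) (by omega) (by omega)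
        have hyM : D.y j ≤ D.y D.M := hmy j D.M hjM le_rfl
        refine ⟨p, hp, ?_, ?_⟩
        · rw [abs_sub_le_iff]
          constructor <;> linarith [hD1.1.1, hD1.1.2, hD2.1.1, hD2.1.2]
        · rw [abs_sub_le_iff]
          constructor <;> linarith [hD1.2.1, hD1.2.2, hD2.2.1, hD2.2.2]
    | succ n ih =>
      intro i j hi1 hiN hj1 hjM
      simp only [Function.iterate_succ_apply']
      constructor
      · intro p hp
        simp only [GenData.Wact, Set.mem_iUnion, Set.mem_image] at hp
        obtain ⟨k, l, ⟨hk1, hkN, hl1, hlM, hsub'⟩, q, hq, hqe⟩ := hp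
        obtain ⟨hqD, hqv⟩ := (ih k l hk1 hkN hl1 hlM).1 q hq
        have hqD' : (q.1, q.2.1) ∈ D.Dij' i j := hsub' hqD
        have hq1 : q.1 ∈ D.Ii' i := hqD'.1
        have hq2 : q.2.1 ∈ D.Jj' j := hqD'.2
        subst hqe
        constructor
        · obtain ⟨-, hubij, -, -⟩ := h1.hu i hi1 hiN
          obtain ⟨-, hvbij, -, -⟩ := h1.hv j hj1 hjM
          exact ⟨hubij.mapsTo hq1, hvbij.mapsTo hq2⟩
        · have hfe := hfeq i j hi1 hiN hj1 hjM (q.1, q.2.1) hqD'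
          have hlip := h2.hFlip i j hi1 hiN hj1 hjM (q.1, q.2.1) hqD' q.2.2 (f (q.1, q.2.1))
          calc |(D.Wmap i j q).2.2 - f ((D.Wmap i j q).1, (D.Wmap i j q).2.1)|
              = |D.F i j q.1 q.2.1 q.2.2 - D.F i j q.1 q.2.1 (f (q.1, q.2.1))| := by
                simp only [GenData.Wmap]
                rw [hfe]
            _ ≤ D.alpha i j * |q.2.2 - f (q.1, q.2.1)| := hlip
            _ ≤ abar * (abar ^ n * E0) := by
                apply mul_le_mul (halpha_le i j hi1 hiN hj1 hjM) hqv (abs_nonneg _) habar0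
            _ = abar ^ (n+1) * E0 := by ring
      · intro ab hab
        obtain ⟨k, l, ⟨hk1, hkN, hl1, hlM, hsub'⟩, a'b', ha'b'Dkl, hua, hvb⟩ :=
          hdecomp i j hi1 hiN hj1 hjM ab hab
        obtain ⟨p', hp'S, hp'1, hp'2⟩ := (ih k l hk1 hkN hl1 hlM).2 a'b' ha'b'Dkl
        have hp'D := ((ih k l hk1 hkN hl1 hlM).1 p' hp'S).1
        refine ⟨D.Wmap i j p', ?_, ?_, ?_⟩
        · simp only [GenData.Wact, Set.mem_iUnion, Set.mem_image]
          exact ⟨k, l, ⟨hk1, hkN, hl1, hlM, hsub'⟩, p', hp'S, rfl⟩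
        · have ha'I : a'b'.1 ∈ D.Ii' i := (hsub' ha'b'Dkl).1
          have hpI : p'.1 ∈ D.Ii' i := (hsub' hp'D).1
          rw [← hua]
          calc |D.u i a'b'.1 - (D.Wmap i j p').1|
              = |D.u i a'b'.1 - D.u i p'.1| := rfl
            _ ≤ c * |a'b'.1 - p'.1| := hcu i hi1 hiN _ ha'I _ hpI
            _ ≤ c * (c ^ n * H) := mul_le_mul_of_nonneg_left hp'1 hc0
            _ = c ^ (n+1) * H := by ring
        · have hb'J : a'b'.2 ∈ D.Jj' j := (hsub' ha'b'Dkl).2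
          have hpJ : p'.2.1 ∈ D.Jj' j := (hsub' hp'D).2
          rw [← hvb]
          calc |D.v j a'b'.2 - (D.Wmap i j p').2.1|
              = |D.v j a'b'.2 - D.v j p'.2.1| := rfl
            _ ≤ c * |a'b'.2 - p'.2.1| := hcv j hj1 hjM _ hb'J _ hpJ
            _ ≤ c * (c ^ n * H) := mul_le_mul_of_nonneg_left hp'2 hc0
            _ = c ^ (n+1) * H := by ring
  -- conclusion
  intro i j hi1 hiN hj1 hjM
  have hufc : UniformContinuousOn f (D.I ×ˢ D.J) :=
    hIJcomp.uniformContinuousOn_of_continuous hfc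
  rw [Metric.tendsto_atTop]
  intro ε hε
  obtain ⟨δ, hδ0, hδ⟩ := Metric.uniformContinuousOn_iff.1 hufc (ε/4) (by linarith)
  have t1 : Filter.Tendsto (fun n : ℕ => abar ^ n * E0) Filter.atTop (nhds 0) := by
    simpa using (tendsto_pow_atTop_nhds_zero_of_lt_one habar0 habar1).mul_const E0
  have t2 : Filter.Tendsto (fun n : ℕ => c ^ n * H) Filter.atTop (nhds 0) := by
    simpa using (tendsto_pow_atTop_nhds_zero_of_lt_one hc0 hc1).mul_const H
  have e1 : ∀ᶠ n in Filter.atTop, abar ^ n * E0 < ε/4 :=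
    t1.eventually (gt_mem_nhds (by linarith))
  have e2 : ∀ᶠ n in Filter.atTop, c ^ n * H < min δ (ε/4) :=
    t2.eventually (gt_mem_nhds (lt_min hδ0 (by linarith)))
  obtain ⟨n0, hn0⟩ := Filter.eventually_atTop.1 (e1.and e2)
  refine ⟨n0, fun n hn => ?_⟩
  obtain ⟨he1, he2⟩ := hn0 n hn
  have hδle : c ^ n * H < δ := lt_of_lt_of_le he2 (min_le_left _ _)
  have hεle : c ^ n * H < ε/4 := lt_of_lt_of_le he2 (min_le_right _ _)
  have hd : Metric.hausdorffDist ((D.Wact)^[n] A i j) (graphOn f (D.Dij i j)) ≤ ε/2 := by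
    apply Metric.hausdorffDist_le_of_mem_dist (by linarith)
    · intro p hp
      obtain ⟨hpD, hpv⟩ := (key n i j hi1 hiN hj1 hjM).1 p hp
      refine ⟨(p.1, p.2.1, f (p.1, p.2.1)), ⟨(p.1, p.2.1), hpD, rfl⟩, ?_⟩
      rw [Prod.dist_eq, Prod.dist_eq]
      refine max_le (by simp [dist_self]; linarith) (max_le (by simp [dist_self]; linarith) ?_)
      rw [Real.dist_eq]
      linarith
    · intro q hq
      obtain ⟨ab, habD, habq⟩ := hq
      obtain ⟨p, hpS, h1', h2'⟩ := (key n i j hi1 hiN hj1 hjM).2 ab habD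
      have hpD := ((key n i j hi1 hiN hj1 hjM).1 p hpS).1
      refine ⟨p, hpS, ?_⟩
      subst habq
      rw [Prod.dist_eq, Prod.dist_eq]
      refine max_le (by rw [Real.dist_eq]; linarith) (max_le (by rw [Real.dist_eq]; linarith) ?_)
      have habIJ : ab ∈ D.I ×ˢ D.J := hDijIJ i j hi1 hiN hj1 hjM ab habD
      have hpIJ : (p.1, p.2.1) ∈ D.I ×ˢ D.J := hDijIJ i j hi1 hiN hj1 hjM _ hpD
      have hnear : dist ab (p.1, p.2.1) < δ := by
        rw [Prod.dist_eq]
        apply max_lt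
        · rw [Real.dist_eq]; linarith [abs_nonneg (ab.1 - p.1)]
        · rw [Real.dist_eq]; linarith [abs_nonneg (ab.2 - p.2.1)]
      have hfnear : dist (f ab) (f (p.1, p.2.1)) < ε/4 := hδ ab habIJ _ hpIJ hnear
      have hvert : |p.2.2 - f (p.1, p.2.1)| ≤ abar ^ n * E0 :=
        ((key n i j hi1 hiN hj1 hjM).1 p hpS).2
      rw [Real.dist_eq] at hfnear ⊢
      have htri : |f ab - p.2.2| ≤ |f ab - f (p.1, p.2.1)| + |f (p.1, p.2.1) - p.2.2| :=
        abs_sub_le _ _ _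
      rw [abs_sub_comm (f (p.1, p.2.1)) p.2.2] at htri
      linarith
  have hnn : (0:ℝ) ≤ Metric.hausdorffDist ((D.Wact)^[n] A i j) (graphOn f (D.Dij i j)) :=
    Metric.hausdorffDist_nonneg
  rw [Real.dist_eq, sub_zero, abs_of_nonneg hnn]
  linarith
end
end

section
/- Let the general recurrent-IFS interpolation setup hold and for each (i,j) let g_{ij} : D'_{ij} → ℝ be the bilinear function (of the form a+bx+cy+dxy) with g_{ij}(x'_k,y'_ℓ)=z'_{kℓ} for (k,ℓ)∈{i−1,i}×{j−1,j}. Then the matchable conditions hold automatically: for all 1≤i≤N−1, 1≤j≤M and x*=u_i^{-1}(x_i)=u_{i+1}^{-1}(x_i) (namely x*=x'_i) one has g_{ij}(x*,y)=g_{i+1,j}(x*,y) for all y∈J'_j, and for all 1≤i≤N, 1≤j≤M−1 and y*=v_j^{-1}(y_j)=v_{j+1}^{-1}(y_j) (namely y*=y'_j) one has g_{ij}(x,y*)=g_{i,j+1}(x,y*) for all x∈I'_i. -/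
/- General recurrent-IFS interpolation setup (Liang–Ruan,
   "Construction and box dimension of recurrent fractal interpolation surfaces"). -/

noncomputable section
open Set

open GenData in
/-- If each `g_{ij}` is the bilinear function (of the form `a + b x + c y + d x y`)
through the four corner values `z'`, then the matchable conditions hold automatically:
`g_{ij}(x'_i, y) = g_{i+1,j}(x'_i, y)` for `y ∈ J'_j` (with `x* = u_i⁻¹(x_i) = x'_i`),
and `g_{ij}(x, y'_j) = g_{i,j+1}(x, y'_j)` for `x ∈ I'_i` (with `y* = v_j⁻¹(y_j) = y'_j`). -/
theorem bilinear_g_matchable (D : GenData) (hD : D.GridHyp) (g : ℕ → ℕ → ℝ × ℝ → ℝ)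
    (hgbil : ∀ i j, 1 ≤ i → i ≤ D.N → 1 ≤ j → j ≤ D.M →
      ∃ a b c d : ℝ, ∀ p : ℝ × ℝ, g i j p = a + b * p.1 + c * p.2 + d * p.1 * p.2)
    (hgval : ∀ i j, 1 ≤ i → i ≤ D.N → 1 ≤ j → j ≤ D.M →
      ∀ k ∈ ({i - 1, i} : Set ℕ), ∀ l ∈ ({j - 1, j} : Set ℕ),
        g i j (D.x' k, D.y' l) = D.z' k l) :
    (∀ i j, 1 ≤ i → i < D.N → 1 ≤ j → j ≤ D.M →
      ∀ t ∈ D.Jj' j, g i j (D.x' i, t) = g (i + 1) j (D.x' i, t)) ∧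
    (∀ i j, 1 ≤ i → i ≤ D.N → 1 ≤ j → j < D.M →
      ∀ t ∈ D.Ii' i, g i j (t, D.y' j) = g i (j + 1) (t, D.y' j)) := by
  have affine_eq : ∀ (A B A' B' s1 s2 : ℝ), s1 ≠ s2 →
      A + B * s1 = A' + B' * s1 → A + B * s2 = A' + B' * s2 →
      ∀ t, A + B * t = A' + B' * t := by
    intro A B A' B' s1 s2 hne h1 h2 t
    have hB : B = B' := by
      have hs : s1 - s2 ≠ 0 := sub_ne_zero.mpr hne
      have : B * (s1 - s2) = B' * (s1 - s2) := by ring_nf; nlinarith [h1, h2]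
      exact mul_right_cancel₀ hs this
    subst hB
    have hA : A = A' := by linarith
    rw [hA]
  constructor
  · intro i j hi1 hiN hj1 hjM t ht
    have hiN' : i ≤ D.N := le_of_lt hiN
    have hi1N : 1 ≤ i + 1 := by omega
    have hiN1 : i + 1 ≤ D.N := by omega
    obtain ⟨a, b, c, d, hg⟩ := hgbil i j hi1 hiN' hj1 hjM
    obtain ⟨a', b', c', d', hg'⟩ := hgbil (i + 1) j hi1N hiN1 hj1 hjM
    have hyne : D.y' (j - 1) ≠ D.y' j := by
      have h1 : D.y (j - 1) < D.y j := by
        have := hD.hy (j - 1) (by omega)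
        have hjj : j - 1 + 1 = j := by omega
        rwa [hjj] at this
      have h2 := hD.hgapy j hj1 hjM
      intro h
      rw [h, sub_self, abs_zero] at h2
      linarith
    have hv1 := hgval i j hi1 hiN' hj1 hjM i (by right; rfl) (j - 1) (by left; rfl)
    have hv2 := hgval i j hi1 hiN' hj1 hjM i (by right; rfl) j (by right; rfl)
    have hv1' := hgval (i + 1) j hi1N hiN1 hj1 hjM i
      (by left; simp) (j - 1) (by left; rfl)
    have hv2' := hgval (i + 1) j hi1N hiN1 hj1 hjM i
      (by left; simp) j (by right; rfl)
    rw [hg] at hv1 hv2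
    rw [hg'] at hv1' hv2'
    simp only at hv1 hv2 hv1' hv2'
    rw [hg, hg']
    simp only
    have key := affine_eq (a + b * D.x' i) (c + d * D.x' i)
      (a' + b' * D.x' i) (c' + d' * D.x' i) (D.y' (j - 1)) (D.y' j) hyne
      (by nlinarith [hv1, hv1']) (by nlinarith [hv2, hv2']) t
    nlinarith [key]
  · intro i j hi1 hiN hj1 hjM t ht
    have hjM' : j ≤ D.M := le_of_lt hjM
    have hj1M : 1 ≤ j + 1 := by omega
    have hjM1 : j + 1 ≤ D.M := by omega
    obtain ⟨a, b, c, d, hg⟩ := hgbil i j hi1 hiN hj1 hjM'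
    obtain ⟨a', b', c', d', hg'⟩ := hgbil i (j + 1) hi1 hiN hj1M hjM1
    have hxne : D.x' (i - 1) ≠ D.x' i := by
      have h1 : D.x (i - 1) < D.x i := by
        have := hD.hx (i - 1) (by omega)
        have hii : i - 1 + 1 = i := by omega
        rwa [hii] at this
      have h2 := hD.hgapx i hi1 hiN
      intro h
      rw [h, sub_self, abs_zero] at h2
      linarith
    have hv1 := hgval i j hi1 hiN hj1 hjM' (i - 1) (by left; rfl) j (by right; rfl)
    have hv2 := hgval i j hi1 hiN hj1 hjM' i (by right; rfl) j (by right; rfl)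
    have hv1' := hgval i (j + 1) hi1 hiN hj1M hjM1 (i - 1) (by left; rfl) j
      (by left; simp)
    have hv2' := hgval i (j + 1) hi1 hiN hj1M hjM1 i (by right; rfl) j
      (by left; simp)
    rw [hg] at hv1 hv2
    rw [hg'] at hv1' hv2'
    simp only at hv1 hv2 hv1' hv2'
    rw [hg, hg']
    simp only
    have key := affine_eq (a + c * D.y' j) (b + d * D.y' j)
      (a' + c' * D.y' j) (b' + d' * D.y' j) (D.x' (i - 1)) (D.x' i) hxne
      (by nlinarith [hv1, hv1']) (by nlinarith [hv2, hv2']) t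
    nlinarith [key]
end
end

section
/- Let f be the bilinear RFIF from the bilinear RFIF setup (with the integer K≥2). Then the lower box dimension of Γf is at least max{2, 1 + liminf_{n→∞} log O(f,n)/(n log K)}, and the upper box dimension of Γf is at most 1 + limsup_{n→∞} log(O(f,n)+2KⁿN)/(n log K). -/
/- Bilinear recurrent fractal interpolation surfaces on [0,1]² (Liang–Ruan,
   "Construction and box dimension of recurrent fractal interpolation surfaces"). -/

noncomputable section
open Set Filter

namespace RFIS

/-- The grid point `x_i = i / N` (also used for `y_j = j / N`). -/
def xg (N i : ℕ) : ℝ := (i : ℝ) / (N : ℝ)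

/-- The interval `I_i = [x_{i-1}, x_i]` (also `J_j`). -/
def Ii (N i : ℕ) : Set ℝ := Icc (xg N (i - 1)) (xg N i)

/-- The unit square `[0,1]²`. -/
def sq : Set (ℝ × ℝ) := Icc (0 : ℝ) 1 ×ˢ Icc (0 : ℝ) 1

/-- The cell `D_{ij} = I_i × J_j`. -/
def Dij (N i j : ℕ) : Set (ℝ × ℝ) := Ii N i ×ˢ Ii N j

/-- The point `x'_i = x_{px i}` chosen from the grid. -/
def xp (N : ℕ) (px : ℕ → ℕ) (i : ℕ) : ℝ := xg N (px i)

/-- The interval `I'_i`, with endpoints `x'_{i-1}` and `x'_i`. -/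
def Ii' (N : ℕ) (px : ℕ → ℕ) (i : ℕ) : Set ℝ := uIcc (xp N px (i - 1)) (xp N px i)

/-- The domain `D'_{ij} = I'_i × J'_j`. -/
def Dij' (N : ℕ) (px py : ℕ → ℕ) (i j : ℕ) : Set (ℝ × ℝ) := Ii' N px i ×ˢ Ii' N py j

/-- The affine map `u_i : I'_i → I_i` with `u_i(x'_{i-1}) = x_{i-1}` and `u_i(x'_i) = x_i`
(also used for `v_j`). -/
def usub (N : ℕ) (px : ℕ → ℕ) (i : ℕ) (t : ℝ) : ℝ :=
  xg N (i - 1) + (t - xp N px (i - 1)) * ((xg N i - xg N (i - 1)) / (xp N px i - xp N px (i - 1)))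

/-- `F` is bilinear on `E`: of the form `a + b x + c y + d x y` on `E`. -/
def IsBilinearOn (F : ℝ × ℝ → ℝ) (E : Set (ℝ × ℝ)) : Prop :=
  ∃ a b c d : ℝ, ∀ p ∈ E, F p = a + b * p.1 + c * p.2 + d * p.1 * p.2

/-- The bilinear RFIF setup on `[0,1]²`: data `z_{ij}` on the uniform `N × N` grid
(`M = N`, `x_i = y_i = i/N`), vertical scaling factors `s_{ij}` with `|s_{ij}| < 1`,
the points `x'_i = x_{px i}`, `y'_j = y_{py j}` with `|I'_i| = K |I_i|`, `|J'_j| = K |J_j|`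
and the domains `D'_{ij}` pairwise equal or with disjoint interiors; the functions `S`, `h`
bilinear on each cell with the prescribed grid values, the bilinear functions `g_{ij}` with
corner values `z'`, and the bilinear RFIF `f`: the continuous function interpolating the
data and satisfying `f(u_i x, v_j y) = S(u_i x, v_j y)(f(x,y) − g_{ij}(x,y)) + h(u_i x, v_j y)`
on each `D'_{ij}`. -/
structure Setup where
  N : ℕ
  K : ℕ
  hN : 2 ≤ N
  hK : 2 ≤ K
  px : ℕ → ℕ
  py : ℕ → ℕ
  hpx : ∀ i ≤ N, px i ≤ N
  hpy : ∀ j ≤ N, py j ≤ N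
  hKx : ∀ i, 1 ≤ i → i ≤ N → |xp N px i - xp N px (i - 1)| = (K : ℝ) * (xg N i - xg N (i - 1))
  hKy : ∀ j, 1 ≤ j → j ≤ N → |xp N py j - xp N py (j - 1)| = (K : ℝ) * (xg N j - xg N (j - 1))
  hdisj : ∀ i₁ j₁ i₂ j₂, 1 ≤ i₁ → i₁ ≤ N → 1 ≤ j₁ → j₁ ≤ N → 1 ≤ i₂ → i₂ ≤ N → 1 ≤ j₂ → j₂ ≤ N →
    Dij' N px py i₁ j₁ = Dij' N px py i₂ j₂ ∨
      interior (Dij' N px py i₁ j₁) ∩ interior (Dij' N px py i₂ j₂) = ∅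
  z : ℕ → ℕ → ℝ
  s : ℕ → ℕ → ℝ
  hs : ∀ i ≤ N, ∀ j ≤ N, |s i j| < 1
  S : ℝ × ℝ → ℝ
  hScont : ContinuousOn S sq
  hSbil : ∀ i j, 1 ≤ i → i ≤ N → 1 ≤ j → j ≤ N → IsBilinearOn S (Dij N i j)
  hSval : ∀ i ≤ N, ∀ j ≤ N, S (xg N i, xg N j) = s i j
  h : ℝ × ℝ → ℝ
  hhcont : ContinuousOn h sq
  hhbil : ∀ i j, 1 ≤ i → i ≤ N → 1 ≤ j → j ≤ N → IsBilinearOn h (Dij N i j)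
  hhval : ∀ i ≤ N, ∀ j ≤ N, h (xg N i, xg N j) = z i j
  g : ℕ → ℕ → ℝ × ℝ → ℝ
  hgbil : ∀ i j, 1 ≤ i → i ≤ N → 1 ≤ j → j ≤ N → IsBilinearOn (g i j) (Dij' N px py i j)
  hgval : ∀ i j, 1 ≤ i → i ≤ N → 1 ≤ j → j ≤ N →
    ∀ k ∈ ({i - 1, i} : Set ℕ), ∀ l ∈ ({j - 1, j} : Set ℕ),
      g i j (xp N px k, xp N py l) = z (px k) (py l)
  f : ℝ × ℝ → ℝ
  hfcont : ContinuousOn f sq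
  hfval : ∀ i ≤ N, ∀ j ≤ N, f (xg N i, xg N j) = z i j
  hfeq : ∀ i j, 1 ≤ i → i ≤ N → 1 ≤ j → j ≤ N → ∀ p ∈ Dij' N px py i j,
    f (usub N px i p.1, usub N py j p.2)
      = S (usub N px i p.1, usub N py j p.2) * (f p - g i j p)
        + h (usub N px i p.1, usub N py j p.2)

/-- The oscillation `O(f, E) = sup {f(x') − f(x'') : x', x'' ∈ E}`. -/
def Osc (f : ℝ × ℝ → ℝ) (E : Set (ℝ × ℝ)) : ℝ :=
  sSup {d : ℝ | ∃ p ∈ E, ∃ q ∈ E, d = f p - f q}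

/-- The dyadic-type square `Dⁿ_{kl} = [(k-1)/(KⁿN), k/(KⁿN)] × [(l-1)/(KⁿN), l/(KⁿN)]`. -/
def Dn (N K n k l : ℕ) : Set (ℝ × ℝ) :=
  Icc (((k : ℝ) - 1) / ((K : ℝ) ^ n * (N : ℝ))) ((k : ℝ) / ((K : ℝ) ^ n * (N : ℝ))) ×ˢ
    Icc (((l : ℝ) - 1) / ((K : ℝ) ^ n * (N : ℝ))) ((l : ℝ) / ((K : ℝ) ^ n * (N : ℝ)))

open Classical in
/-- `O(f, n, U) = Σ { O(f, Dⁿ_{kl}) : Dⁿ_{kl} ⊆ U }`. -/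
def OscSum (f : ℝ × ℝ → ℝ) (N K n : ℕ) (U : Set (ℝ × ℝ)) : ℝ :=
  ∑ k ∈ Finset.Icc 1 (K ^ n * N), ∑ l ∈ Finset.Icc 1 (K ^ n * N),
    if Dn N K n k l ⊆ U then Osc f (Dn N K n k l) else 0

/-- The `ε`-coordinate cube `∏_{i=1}^3 [k_i ε, (k_i+1) ε]` in `ℝ³`. -/
def cube (ε : ℝ) (k : ℤ × ℤ × ℤ) : Set (ℝ × ℝ × ℝ) :=
  Icc ((k.1 : ℝ) * ε) (((k.1 : ℝ) + 1) * ε) ×ˢ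
    Icc ((k.2.1 : ℝ) * ε) (((k.2.1 : ℝ) + 1) * ε) ×ˢ
      Icc ((k.2.2 : ℝ) * ε) (((k.2.2 : ℝ) + 1) * ε)

/-- `N_E(ε)`: the number of `ε`-coordinate cubes intersecting `E`. -/
def Ncubes (E : Set (ℝ × ℝ × ℝ)) (ε : ℝ) : ℕ :=
  {k : ℤ × ℤ × ℤ | (cube ε k ∩ E).Nonempty}.ncard

/-- `log N_E(ε) / log (1/ε)`. -/
def boxRatio (E : Set (ℝ × ℝ × ℝ)) (ε : ℝ) : ℝ :=
  Real.log (Ncubes E ε) / Real.log (1 / ε)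

/-- The upper box dimension `lim sup_{ε→0+} log N_E(ε) / log (1/ε)`. -/
def upperBoxDim (E : Set (ℝ × ℝ × ℝ)) : ℝ :=
  limsup (boxRatio E) (nhdsWithin 0 (Ioi 0))

/-- The lower box dimension `lim inf_{ε→0+} log N_E(ε) / log (1/ε)`. -/
def lowerBoxDim (E : Set (ℝ × ℝ × ℝ)) : ℝ :=
  liminf (boxRatio E) (nhdsWithin 0 (Ioi 0))

/-- The box dimension of `E` exists and equals `d`. -/
def HasBoxDim (E : Set (ℝ × ℝ × ℝ)) (d : ℝ) : Prop :=
  Tendsto (boxRatio E) (nhdsWithin 0 (Ioi 0)) (nhds d)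

/-- The graph `Γ f|_E = {(x, y, f(x,y)) : (x,y) ∈ E}`. -/
def graphOn (f : ℝ × ℝ → ℝ) (E : Set (ℝ × ℝ)) : Set (ℝ × ℝ × ℝ) :=
  (fun p : ℝ × ℝ => (p.1, p.2, f p)) '' E

/-- `B` is a partition of `[0,1]²`: nonempty sets covering `[0,1]²` with pairwise
disjoint interiors. -/
def IsPartition (m : ℕ) (B : Fin m → Set (ℝ × ℝ)) : Prop :=
  (∀ r, (B r).Nonempty) ∧ (⋃ r, B r) = sq ∧
    ∀ r t, r ≠ t → interior (B r) ∩ interior (B t) = ∅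

/-- The partition `B` is compatible with `{D_{ij}, D'_{ij}}`: every `D_{ij}` lies in some
`B_r` and every `D'_{ij}` in some `B_t`; and whenever some `(i,j)` has `D_{ij} ⊆ B_r` and
`D'_{ij} ⊆ B_t`, then `B_t = ⋃ {D'_{kl} : D_{kl} ⊆ B_r, D'_{kl} ⊆ B_t}`. -/
def IsCompatible (st : Setup) {m : ℕ} (B : Fin m → Set (ℝ × ℝ)) : Prop :=
  (∀ i j, 1 ≤ i → i ≤ st.N → 1 ≤ j → j ≤ st.N →
    (∃ r, Dij st.N i j ⊆ B r) ∧ (∃ t, Dij' st.N st.px st.py i j ⊆ B t)) ∧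
  (∀ r t : Fin m,
    (∃ i j, 1 ≤ i ∧ i ≤ st.N ∧ 1 ≤ j ∧ j ≤ st.N ∧
      Dij st.N i j ⊆ B r ∧ Dij' st.N st.px st.py i j ⊆ B t) →
    B t = ⋃ (k : ℕ) (l : ℕ)
      (_ : 1 ≤ k ∧ k ≤ st.N ∧ 1 ≤ l ∧ l ≤ st.N ∧
        Dij st.N k l ⊆ B r ∧ Dij' st.N st.px st.py k l ⊆ B t),
      Dij' st.N st.px st.py k l)

/-- The index set `Σ_N × Σ_N = {1,…,N}²`. -/
def idxS (N : ℕ) : Finset (ℕ × ℕ) := Finset.Icc 1 N ×ˢ Finset.Icc 1 N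

open Classical in
/-- `Λ_r = {(i,j) : D_{ij} ⊆ B_r}`. -/
def Lam (st : Setup) {m : ℕ} (B : Fin m → Set (ℝ × ℝ)) (r : Fin m) : Finset (ℕ × ℕ) :=
  (idxS st.N).filter fun ij => Dij st.N ij.1 ij.2 ⊆ B r

open Classical in
/-- `Λ'_t = {(i,j) : D'_{ij} ⊆ B_t}`. -/
def Lam' (st : Setup) {m : ℕ} (B : Fin m → Set (ℝ × ℝ)) (t : Fin m) : Finset (ℕ × ℕ) :=
  (idxS st.N).filter fun ij => Dij' st.N st.px st.py ij.1 ij.2 ⊆ B t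

/-- The rectangle `[x_α, x_{α+K}] × [y_β, y_{β+K}]`. -/
def rect (N K α β : ℕ) : Set (ℝ × ℝ) :=
  Icc (xg N α) (xg N (α + K)) ×ˢ Icc (xg N β) (xg N (β + K))

open Classical in
/-- `Λ_r(α,β) = {(i,j) ∈ Λ_r : D'_{ij} = [x_α, x_{α+K}] × [y_β, y_{β+K}]}`. -/
def LamAB (st : Setup) {m : ℕ} (B : Fin m → Set (ℝ × ℝ)) (r : Fin m) (α β : ℕ) :
    Finset (ℕ × ℕ) :=
  (Lam st B r).filter fun ij => Dij' st.N st.px st.py ij.1 ij.2 = rect st.N st.K α β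

/-- The vertical scaling factors are steady: for each cell, the four corner factors are
all nonnegative or all nonpositive. -/
def Steady (st : Setup) : Prop :=
  ∀ i j, 1 ≤ i → i ≤ st.N → 1 ≤ j → j ≤ st.N →
    (0 ≤ st.s (i - 1) (j - 1) ∧ 0 ≤ st.s (i - 1) j ∧ 0 ≤ st.s i (j - 1) ∧ 0 ≤ st.s i j) ∨
    (st.s (i - 1) (j - 1) ≤ 0 ∧ st.s (i - 1) j ≤ 0 ∧ st.s i (j - 1) ≤ 0 ∧ st.s i j ≤ 0)

/-- The sum `Σ_{(i,j) ∈ Λ_r(α,β)} |S(u_i(x_a), v_j(y_b))|`. -/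
def cSum (st : Setup) {m : ℕ} (B : Fin m → Set (ℝ × ℝ)) (r : Fin m) (α β a b : ℕ) : ℝ :=
  ∑ ij ∈ LamAB st B r α β,
    |st.S (usub st.N st.px ij.1 (xg st.N a), usub st.N st.py ij.2 (xg st.N b))|

/-- The vertical scaling factors have uniform sums `γ_{rt}` under the partition `B`:
whenever `Λ_r ∩ Λ'_t ≠ ∅` and `[x_α, x_{α+K}] × [y_β, y_{β+K}] ∈ {D'_{ij} : (i,j) ∈ Λ_r ∩ Λ'_t}`,
the four corner sums `Σ_{(i,j) ∈ Λ_r(α,β)} |S(u_i(x_a), v_j(y_b))|`,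
`(a,b) ∈ {α, α+K} × {β, β+K}`, all equal `γ_{rt}`. -/
def HasUniformSums (st : Setup) {m : ℕ} (B : Fin m → Set (ℝ × ℝ))
    (γ : Fin m → Fin m → ℝ) : Prop :=
  ∀ r t : Fin m, (Lam st B r ∩ Lam' st B t).Nonempty →
    ∀ α β : ℕ, α + st.K ≤ st.N → β + st.K ≤ st.N →
      (∃ ij ∈ Lam st B r ∩ Lam' st B t,
        Dij' st.N st.px st.py ij.1 ij.2 = rect st.N st.K α β) →
      cSum st B r α β α β = γ r t ∧ cSum st B r α β (α + st.K) β = γ r t ∧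
      cSum st B r α β α (β + st.K) = γ r t ∧ cSum st B r α β (α + st.K) (β + st.K) = γ r t

/-- `γ_{rt} = 0` whenever `Λ_r ∩ Λ'_t = ∅`. -/
def GammaZero (st : Setup) {m : ℕ} (B : Fin m → Set (ℝ × ℝ))
    (γ : Fin m → Fin m → ℝ) : Prop :=
  ∀ r t : Fin m, Lam st B r ∩ Lam' st B t = ∅ → γ r t = 0

/-- There is an `n`-path (for some `n ≥ 1`) from `t` to `r` in the matrix `γ`:
a sequence `i_0 = t, …, i_n = r` with `γ_{i_k, i_{k-1}} > 0` for `k = 1, …, n`. -/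
def IsPathFrom {m : ℕ} (γ : Fin m → Fin m → ℝ) (t r : Fin m) : Prop :=
  ∃ n : ℕ, 1 ≤ n ∧ ∃ c : ℕ → Fin m, c 0 = t ∧ c n = r ∧
    ∀ k, 1 ≤ k → k ≤ n → 0 < γ (c k) (c (k - 1))

/-- `r ∼ t`: there are paths both from `r` to `t` and from `t` to `r`. -/
def Conn {m : ℕ} (γ : Fin m → Fin m → ℝ) (r t : Fin m) : Prop :=
  IsPathFrom γ r t ∧ IsPathFrom γ t r

/-- A connected subset: `r ∼ t` for all `r, t ∈ V`. -/
def IsConnSet {m : ℕ} (γ : Fin m → Fin m → ℝ) (V : Finset (Fin m)) : Prop :=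
  ∀ r ∈ V, ∀ t ∈ V, Conn γ r t

/-- A connected component: a maximal (nonempty) connected subset. -/
def IsConnComp {m : ℕ} (γ : Fin m → Fin m → ℝ) (V : Finset (Fin m)) : Prop :=
  V.Nonempty ∧ IsConnSet γ V ∧ ∀ W : Finset (Fin m), IsConnSet γ W → V ⊆ W → W = V

/-- The spectral radius of a real square matrix: the largest modulus of a (complex)
eigenvalue. -/
def specRad {n : Type*} [Fintype n] [DecidableEq n] (A : Matrix n n ℝ) : ℝ :=
  sSup {x : ℝ | ∃ μ ∈ spectrum ℂ (A.map (algebraMap ℝ ℂ)), x = ‖μ‖}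

/-- The submatrix `G|_V` of `G = (γ_{rt})` indexed by a subset `V`. -/
def subMat {m : ℕ} (γ : Fin m → Fin m → ℝ) (V : Finset (Fin m)) :
    Matrix {x // x ∈ V} {x // x ∈ V} ℝ :=
  fun a b => γ a.1 b.1

/-- `(k,l)` is an ancestor of `(i,j)`: there is a chain `(i,j) = (i_0,j_0), …, (i_n,j_n) = (k,l)`
in `Σ_N × Σ_N` with `D_{i_τ j_τ} ⊆ D'_{i_{τ-1} j_{τ-1}}` for all `τ`. -/
def Ancestor (st : Setup) (i j k l : ℕ) : Prop :=
  ∃ n : ℕ, 1 ≤ n ∧ ∃ c : ℕ → ℕ × ℕ,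
    c 0 = (i, j) ∧ c n = (k, l) ∧
    (∀ τ ≤ n, 1 ≤ (c τ).1 ∧ (c τ).1 ≤ st.N ∧ 1 ≤ (c τ).2 ∧ (c τ).2 ≤ st.N) ∧
    ∀ τ, 1 ≤ τ → τ ≤ n →
      Dij st.N (c τ).1 (c τ).2 ⊆ Dij' st.N st.px st.py (c (τ - 1)).1 (c (τ - 1)).2

/-- `A(i,j) = {(i,j)} ∪ {ancestors of (i,j)}`. -/
def AncSet (st : Setup) (i j : ℕ) : Set (ℕ × ℕ) :=
  {(i, j)} ∪ {kl | Ancestor st i j kl.1 kl.2}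

/-- The pair `(i,j)` is degenerate: every `(k,l) ∈ A(i,j)` has all four vertical scaling
corner factors zero, or `z_{pq} = g_{kl}(x_p, y_q)` for all grid points `(x_p, y_q) ∈ D'_{kl}`. -/
def DegenPair (st : Setup) (i j : ℕ) : Prop :=
  ∀ kl ∈ AncSet st i j,
    (st.s (kl.1 - 1) (kl.2 - 1) = 0 ∧ st.s (kl.1 - 1) kl.2 = 0 ∧
      st.s kl.1 (kl.2 - 1) = 0 ∧ st.s kl.1 kl.2 = 0) ∨
    (∀ p ≤ st.N, ∀ q ≤ st.N, (xg st.N p, xg st.N q) ∈ Dij' st.N st.px st.py kl.1 kl.2 →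
      st.z p q = st.g kl.1 kl.2 (xg st.N p, xg st.N q))

/-- The index `r` is degenerate: every `(i,j) ∈ Λ_r` is degenerate. -/
def DegenIdx (st : Setup) {m : ℕ} (B : Fin m → Set (ℝ × ℝ)) (r : Fin m) : Prop :=
  ∀ ij ∈ Lam st B r, DegenPair st ij.1 ij.2

/-- A set `V` of indices is degenerate: every `r ∈ V` is degenerate. -/
def DegenComp (st : Setup) {m : ℕ} (B : Fin m → Set (ℝ × ℝ)) (V : Finset (Fin m)) : Prop :=
  ∀ r ∈ V, DegenIdx st B r

end RFIS

/-! At scale `1/M` the cubes meeting the graph are counted column by column. Over a grid cell `D`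
the graph meets between `M·O(f,D)` and `M·O(f,D) + 2` cubes (the lower bound by the intermediate
value theorem), so `N(1/M)` lies between `M·Σ O(f,D)` and `M·Σ O(f,D) + O(M²)`. Passing from the
scales `1/(KⁿN)` to an arbitrary `ε` changes `N(ε)` by a factor of at most `27`, which does not
affect the exponents. -/

namespace RFIS

open Topology

section Levels

variable {ε m L a b x lo hi : ℝ} {T : Set ℝ}

lemma mem_Icc_ceil_floor {k : ℤ} (hε : 0 < ε) (hx : x ∈ Icc (k * ε) ((k + 1) * ε))
    (hlo : lo ≤ x) (hhi : x ≤ hi) : k ∈ Icc (⌈lo / ε⌉ - 1) ⌊hi / ε⌋ := by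
  refine ⟨?_, Int.le_floor.2 ((le_div_iff₀ hε).2 (hx.1.trans hhi))⟩
  have : lo / ε ≤ ((k + 1 : ℤ) : ℝ) := by
    rw [div_le_iff₀ hε]; push_cast; linarith [hx.2]
  linarith [Int.ceil_le.2 this]

lemma card_Icc_ceil_floor_le (hε : 0 < ε) (hL : 0 ≤ L) :
    ((Finset.Icc (⌈m / ε⌉ - 1) ⌊(m + L) / ε⌋).card : ℝ) ≤ L / ε + 2 := by
  have hcast : ((Finset.Icc (⌈m / ε⌉ - 1) ⌊(m + L) / ε⌋).card : ℝ)
      = max ((⌊(m + L) / ε⌋ + 1 - (⌈m / ε⌉ - 1) : ℤ) : ℝ) 0 := by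
    rw [Int.card_Icc, ← Int.cast_natCast, Int.toNat_eq_max]; push_cast; rfl
  rw [hcast]
  refine max_le ?_ (by positivity)
  have h1 : (⌊(m + L) / ε⌋ : ℝ) ≤ m / ε + L / ε := by rw [← add_div]; exact Int.floor_le _
  have h2 := Int.le_ceil (m / ε)
  push_cast; linarith

def levels (ε : ℝ) (T : Set ℝ) : Set ℤ := {c | (Icc (c * ε) ((c + 1) * ε) ∩ T).Nonempty}

lemma levels_subset_Icc (hε : 0 < ε) (hT : T ⊆ Icc lo hi) :
    levels ε T ⊆ Finset.Icc (⌈lo / ε⌉ - 1) ⌊hi / ε⌋ := by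
  rintro c ⟨x, hx, hxT⟩
  simpa using mem_Icc_ceil_floor hε hx (hT hxT).1 (hT hxT).2

lemma finite_levels (hε : 0 < ε) (hT : T ⊆ Icc lo hi) : (levels ε T).Finite :=
  (Finset.finite_toSet _).subset (levels_subset_Icc hε hT)

lemma ncard_levels_le (hε : 0 < ε) (hL : 0 ≤ L) (hT : T ⊆ Icc m (m + L)) :
    ((levels ε T).ncard : ℝ) ≤ L / ε + 2 := by
  refine le_trans ?_ (card_Icc_ceil_floor_le (m := m) hε hL)
  rw [← Set.ncard_coe_finset]
  exact_mod_cast Set.ncard_le_ncard (levels_subset_Icc hε hT) (Finset.finite_toSet _)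

lemma lt_ncard_levels (hε : 0 < ε) (hab : a ≤ b) (hT : Icc a b ⊆ T)
    (hfin : (levels ε T).Finite) : (b - a) / ε < (levels ε T).ncard := by
  have hsub : (Finset.Icc ⌊a / ε⌋ ⌊b / ε⌋ : Set ℤ) ⊆ levels ε T := by
    intro c hc
    rw [Finset.coe_Icc, mem_Icc] at hc
    have hca : a < (c + 1) * ε := by
      rw [← div_lt_iff₀ hε]
      have : ((⌊a / ε⌋ : ℤ) : ℝ) ≤ c := by exact_mod_cast hc.1
      linarith [Int.lt_floor_add_one (a / ε)]
    have hcb : c * ε ≤ b := by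
      rw [← le_div_iff₀ hε]; exact (Int.cast_le.2 hc.2).trans (Int.floor_le _)
    refine ⟨max a (c * ε), ⟨le_max_right _ _, max_le hca.le (by linarith)⟩,
      hT ⟨le_max_left _ _, max_le hab hcb⟩⟩
  have hcard := Set.ncard_le_ncard hsub hfin
  rw [Set.ncard_coe_finset, Int.card_Icc] at hcard
  have h1 : ((⌊b / ε⌋ + 1 - ⌊a / ε⌋ : ℤ) : ℝ) ≤ (levels ε T).ncard := by
    exact_mod_cast (Int.self_le_toNat _).trans (by exact_mod_cast hcard)
  have h2 := Int.lt_floor_add_one (b / ε)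
  have h3 := Int.floor_le (a / ε)
  push_cast at h1
  rw [sub_div]; linarith

end Levels

section Cubes

variable {ε δ : ℝ} {E : Set (ℝ × ℝ × ℝ)}

/-- The common base of the cubes `cube ε (a, b, c)`, `c ∈ ℤ`. -/
def column (ε : ℝ) (b : ℤ × ℤ) : Set (ℝ × ℝ) :=
  Icc (b.1 * ε) ((b.1 + 1) * ε) ×ˢ Icc (b.2 * ε) ((b.2 + 1) * ε)

lemma mem_cube_iff {k : ℤ × ℤ × ℤ} {q : ℝ × ℝ × ℝ} :
    q ∈ cube ε k ↔
      (q.1, q.2.1) ∈ column ε (k.1, k.2.1) ∧ q.2.2 ∈ Icc (k.2.2 * ε) ((k.2.2 + 1) * ε) := by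
  simp only [cube, column, mem_prod, and_assoc]

lemma mem_cube_floor (hε : 0 < ε) (q : ℝ × ℝ × ℝ) :
    q ∈ cube ε (⌊q.1 / ε⌋, ⌊q.2.1 / ε⌋, ⌊q.2.2 / ε⌋) := by
  have h : ∀ x : ℝ, x ∈ Icc (⌊x / ε⌋ * ε) ((⌊x / ε⌋ + 1) * ε) := fun x =>
    ⟨(le_div_iff₀ hε).1 (Int.floor_le _), (div_le_iff₀ hε).1 (Int.lt_floor_add_one _).le⟩
  exact ⟨h _, h _, h _⟩

lemma finite_cubes (hE : Bornology.IsBounded E) (hε : 0 < ε) :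
    {k | (cube ε k ∩ E).Nonempty}.Finite := by
  obtain ⟨R, hR⟩ := isBounded_iff_forall_norm_le.1 hE
  refine (Set.finite_Icc (⌈-R / ε⌉ - 1, ⌈-R / ε⌉ - 1, ⌈-R / ε⌉ - 1)
    (⌊R / ε⌋, ⌊R / ε⌋, ⌊R / ε⌋)).subset ?_
  rintro k ⟨q, ⟨h1, h2, h3⟩, hq⟩
  have c1 : |q.1| ≤ R := (norm_fst_le q).trans (hR q hq)
  have c2 : |q.2.1| ≤ R := ((norm_fst_le q.2).trans (norm_snd_le q)).trans (hR q hq)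
  have c3 : |q.2.2| ≤ R := ((norm_snd_le q.2).trans (norm_snd_le q)).trans (hR q hq)
  have e1 := mem_Icc_ceil_floor hε h1 (neg_le_of_abs_le c1) (le_of_abs_le c1)
  have e2 := mem_Icc_ceil_floor hε h2 (neg_le_of_abs_le c2) (le_of_abs_le c2)
  have e3 := mem_Icc_ceil_floor hε h3 (neg_le_of_abs_le c3) (le_of_abs_le c3)
  exact ⟨⟨e1.1, e2.1, e3.1⟩, ⟨e1.2, e2.2, e3.2⟩⟩

/-- The `ε`-intervals meeting a fixed `δ`-interval, `δ ≤ ε`: there are at most three. -/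
lemma card_Icc_neighbours_le (hδ : 0 < δ) (hδε : δ ≤ ε) (x : ℤ) :
    (Finset.Icc (⌈x * δ / ε⌉ - 1) ⌊(x * δ + δ) / ε⌋).card ≤ 3 := by
  have h := card_Icc_ceil_floor_le (m := x * δ) (hδ.trans_le hδε) hδ.le
  have : δ / ε ≤ 1 := (div_le_one (hδ.trans_le hδε)).2 hδε
  have h3 : ((Finset.Icc (⌈x * δ / ε⌉ - 1) ⌊(x * δ + δ) / ε⌋).card : ℝ) ≤ 3 := by linarith
  exact_mod_cast h3

lemma Ncubes_le_mul_Ncubes (hE : Bornology.IsBounded E) (hδ : 0 < δ) (hδε : δ ≤ ε) :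
    Ncubes E ε ≤ 27 * Ncubes E δ := by
  classical
  have hε := hδ.trans_le hδε
  set nb : ℤ → Finset ℤ := fun x => Finset.Icc (⌈x * δ / ε⌉ - 1) ⌊(x * δ + δ) / ε⌋
  have hnb : ∀ {x : ℤ} {y : ℝ} {k : ℤ}, y ∈ Icc (k * ε) ((k + 1) * ε) →
      y ∈ Icc (x * δ) ((x + 1) * δ) → k ∈ nb x := fun hk hx => by
    simpa [nb] using mem_Icc_ceil_floor hε hk hx.1 (by linarith [hx.2])
  have key := Finset.card_mul_le_card_mul (fun k c => (cube ε k ∩ cube δ c ∩ E).Nonempty)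
    (s := (finite_cubes hE hε).toFinset) (t := (finite_cubes hE hδ).toFinset) (m := 1) (n := 27)
    (fun k hk => by
      obtain ⟨q, hqk, hqE⟩ := (Set.Finite.mem_toFinset _).1 hk
      exact Finset.card_pos.2 ⟨_, Finset.mem_filter.2
        ⟨(Set.Finite.mem_toFinset _).2 ⟨q, mem_cube_floor hδ q, hqE⟩,
          q, ⟨hqk, mem_cube_floor hδ q⟩, hqE⟩⟩)
    (fun c _ => by
      refine (Finset.card_le_card (t := nb c.1 ×ˢ nb c.2.1 ×ˢ nb c.2.2) ?_).trans ?_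
      · intro k hk
        obtain ⟨q, ⟨⟨hk1, hk2, hk3⟩, hc1, hc2, hc3⟩, -⟩ := (Finset.mem_filter.1 hk).2
        exact Finset.mem_product.2 ⟨hnb hk1 hc1, Finset.mem_product.2 ⟨hnb hk2 hc2, hnb hk3 hc3⟩⟩
      · simp only [Finset.card_product]
        exact Nat.mul_le_mul (card_Icc_neighbours_le hδ hδε _)
          (Nat.mul_le_mul (card_Icc_neighbours_le hδ hδε _) (card_Icc_neighbours_le hδ hδε _)))
  rw [Ncubes, Ncubes, Set.ncard_eq_toFinset_card _ (finite_cubes hE hε),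
    Set.ncard_eq_toFinset_card _ (finite_cubes hE hδ)]
  linarith

lemma cube_inter_graphOn_nonempty_iff {f : ℝ × ℝ → ℝ} {s : Set (ℝ × ℝ)} {k : ℤ × ℤ × ℤ} :
    (cube ε k ∩ graphOn f s).Nonempty ↔
      k.2.2 ∈ levels ε (f '' (s ∩ column ε (k.1, k.2.1))) := by
  constructor
  · rintro ⟨_, hq, p, hp, rfl⟩
    exact ⟨f p, (mem_cube_iff.1 hq).2, p, ⟨hp, (mem_cube_iff.1 hq).1⟩, rfl⟩
  · rintro ⟨_, hz, p, ⟨hp, hpc⟩, rfl⟩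
    exact ⟨(p.1, p.2, f p), mem_cube_iff.2 ⟨hpc, hz⟩, p, hp, rfl⟩

lemma Ncubes_graphOn_eq_sum {f : ℝ × ℝ → ℝ} {s : Set (ℝ × ℝ)}
    (hE : Bornology.IsBounded (graphOn f s)) (hε : 0 < ε) (B : Finset (ℤ × ℤ))
    (hB : ∀ b, (s ∩ column ε b).Nonempty → b ∈ B) :
    Ncubes (graphOn f s) ε = ∑ b ∈ B, (levels ε (f '' (s ∩ column ε b))).ncard := by
  classical
  have hfin := finite_cubes hE hε
  rw [Ncubes, Set.ncard_eq_toFinset_card _ hfin,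
    Finset.card_eq_sum_card_fiberwise (f := fun k => (k.1, k.2.1)) (t := B) ?_]
  · refine Finset.sum_congr rfl fun b _ => ?_
    rw [← Set.ncard_coe_finset, ← Set.ncard_image_of_injective (levels ε (f '' (s ∩ column ε b)))
      (f := fun c => (b.1, b.2, c)) fun c c' h => (Prod.ext_iff.1 (Prod.ext_iff.1 h).2).2]
    refine congrArg Set.ncard (Set.ext fun ⟨k1, k2, k3⟩ => ?_)
    simp only [Finset.coe_filter, Set.Finite.mem_toFinset, mem_ofPred_eq, mem_image,
      cube_inter_graphOn_nonempty_iff, Prod.mk.injEq]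
    constructor
    · rintro ⟨h, rfl⟩; exact ⟨k3, h, rfl, rfl, rfl⟩
    · rintro ⟨c, h, rfl, rfl, rfl⟩; exact ⟨h, rfl⟩
  · intro k hk
    obtain ⟨-, -, p, hp, -⟩ :=
      cube_inter_graphOn_nonempty_iff.1 (hfin.mem_toFinset.1 (Finset.mem_coe.1 hk))
    exact hB _ ⟨p, hp⟩

end Cubes

section Oscillation

variable {f : ℝ × ℝ → ℝ} {E : Set (ℝ × ℝ)}

lemma Osc_eq_sSup_sub_sInf (hE : IsCompact E) (hne : E.Nonempty) (hf : ContinuousOn f E) :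
    Osc f E = sSup (f '' E) - sInf (f '' E) := by
  have hc := hE.image_of_continuousOn hf
  obtain ⟨p, hp, hpv⟩ := hc.sSup_mem (hne.image f)
  obtain ⟨q, hq, hqv⟩ := hc.sInf_mem (hne.image f)
  refine IsGreatest.csSup_eq ⟨⟨p, hp, q, hq, by rw [hpv, hqv]⟩, ?_⟩
  rintro _ ⟨x, hx, y, hy, rfl⟩
  linarith [le_csSup hc.bddAbove (mem_image_of_mem f hx),
    csInf_le hc.bddBelow (mem_image_of_mem f hy)]

lemma image_subset_Icc_Osc (hE : IsCompact E) (hne : E.Nonempty) (hf : ContinuousOn f E) :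
    f '' E ⊆ Icc (sInf (f '' E)) (sInf (f '' E) + Osc f E) := by
  have hc := hE.image_of_continuousOn hf
  rw [Osc_eq_sSup_sub_sInf hE hne hf, add_sub_cancel]
  exact fun y hy => ⟨csInf_le hc.bddBelow hy, le_csSup hc.bddAbove hy⟩

lemma Icc_Osc_subset_image (hE : IsCompact E) (hconn : IsPreconnected E) (hne : E.Nonempty)
    (hf : ContinuousOn f E) : Icc (sInf (f '' E)) (sInf (f '' E) + Osc f E) ⊆ f '' E := by
  have hc := hE.image_of_continuousOn hf
  rw [Osc_eq_sSup_sub_sInf hE hne hf, add_sub_cancel]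
  exact (hconn.image f hf).Icc_subset (hc.sInf_mem (hne.image f)) (hc.sSup_mem (hne.image f))

lemma Osc_nonneg (hE : IsCompact E) (hne : E.Nonempty) (hf : ContinuousOn f E) :
    0 ≤ Osc f E := by
  have hc := hE.image_of_continuousOn hf
  rw [Osc_eq_sSup_sub_sInf hE hne hf, sub_nonneg]
  exact csInf_le_csSup (hne.image f) hc.bddBelow hc.bddAbove

lemma Osc_le_two_mul {R : ℝ} (hE : IsCompact E) (hne : E.Nonempty) (hf : ContinuousOn f E)
    (hR : ∀ p ∈ E, |f p| ≤ R) : Osc f E ≤ 2 * R := by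
  have hc := hE.image_of_continuousOn hf
  obtain ⟨p, hp, hpv⟩ := hc.sSup_mem (hne.image f)
  obtain ⟨q, hq, hqv⟩ := hc.sInf_mem (hne.image f)
  rw [Osc_eq_sSup_sub_sInf hE hne hf, ← hpv, ← hqv]
  linarith [abs_le.1 (hR p hp), abs_le.1 (hR q hq)]

end Oscillation

section Grid

variable {f : ℝ × ℝ → ℝ} {M : ℕ}

lemma zero_mem_sq : ((0 : ℝ), (0 : ℝ)) ∈ sq := ⟨⟨le_rfl, zero_le_one⟩, le_rfl, zero_le_one⟩

lemma isCompact_sq : IsCompact sq := isCompact_Icc.prod isCompact_Icc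

/-- The interior columns at scale `1/M`: the `M²` cells of the uniform grid on `[0,1]²`. -/
abbrev gridIdx (M : ℕ) : Finset (ℤ × ℤ) := Finset.Ico (0 : ℤ) M ×ˢ Finset.Ico (0 : ℤ) M

def gridOsc (f : ℝ × ℝ → ℝ) (M : ℕ) : ℝ := ∑ b ∈ gridIdx M, Osc f (column (M : ℝ)⁻¹ b)

lemma Icc_grid_subset_unitInterval {a : ℤ} (ha : a ∈ Finset.Ico (0 : ℤ) M) :
    Icc (a * (M : ℝ)⁻¹) ((a + 1) * (M : ℝ)⁻¹) ⊆ Icc 0 1 := by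
  rw [Finset.mem_Ico] at ha
  have hM : (0 : ℝ) < M := by exact_mod_cast (show 0 < M by omega)
  have h0 : (0 : ℝ) ≤ a := by exact_mod_cast ha.1
  have h1 : (a : ℝ) + 1 ≤ M := by exact_mod_cast (show a + 1 ≤ M by omega)
  refine Icc_subset_Icc (by positivity) ?_
  rw [← div_eq_mul_inv, div_le_one hM]; exact h1

lemma column_subset_sq {b : ℤ × ℤ} (hb : b ∈ gridIdx M) : column (M : ℝ)⁻¹ b ⊆ sq :=
  prod_mono (Icc_grid_subset_unitInterval (Finset.mem_product.1 hb).1)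
    (Icc_grid_subset_unitInterval (Finset.mem_product.1 hb).2)

lemma isCompact_column (ε : ℝ) (b : ℤ × ℤ) : IsCompact (column ε b) :=
  isCompact_Icc.prod isCompact_Icc

lemma isPreconnected_column (ε : ℝ) (b : ℤ × ℤ) : IsPreconnected (column ε b) :=
  ((convex_Icc _ _).prod (convex_Icc _ _)).isPreconnected

lemma column_nonempty {ε : ℝ} (hε : 0 ≤ ε) (b : ℤ × ℤ) : (column ε b).Nonempty :=
  ⟨(b.1 * ε, b.2 * ε), ⟨le_rfl, by nlinarith⟩, le_rfl, by nlinarith⟩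

lemma mem_Icc_of_sq_inter_column (hM : 0 < M) {b : ℤ × ℤ}
    (h : (sq ∩ column (M : ℝ)⁻¹ b).Nonempty) :
    b ∈ Finset.Icc (-1 : ℤ) M ×ˢ Finset.Icc (-1 : ℤ) M := by
  obtain ⟨p, ⟨⟨hx0, hx1⟩, hy0, hy1⟩, hx, hy⟩ := h
  have hε : (0 : ℝ) < (M : ℝ)⁻¹ := by positivity
  have e1 := mem_Icc_ceil_floor hε hx hx0 hx1
  have e2 := mem_Icc_ceil_floor hε hy hy0 hy1
  simp only [zero_div, Int.ceil_zero, one_div, inv_inv, Int.floor_natCast] at e1 e2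
  simpa [Finset.mem_product] using ⟨e1, e2⟩

lemma Dn_eq_column (N K n k l : ℕ) :
    Dn N K n k l = column ((K ^ n * N : ℕ) : ℝ)⁻¹ ((k : ℤ) - 1, (l : ℤ) - 1) := by
  simp only [Dn, column]; push_cast; simp only [div_eq_mul_inv, sub_add_cancel]

lemma OscSum_sq_eq_gridOsc (f : ℝ × ℝ → ℝ) (N K n : ℕ) :
    OscSum f N K n sq = gridOsc f (K ^ n * N) := by
  rw [OscSum, ← Finset.sum_product', gridOsc]
  refine Finset.sum_nbij' (fun kl => ((kl.1 : ℤ) - 1, (kl.2 : ℤ) - 1))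
    (fun b => ((b.1 + 1).toNat, (b.2 + 1).toNat)) ?_ ?_ ?_ ?_ ?_
  · intro kl hkl
    generalize K ^ n * N = M at *
    simp only [gridIdx, Finset.mem_product, Finset.mem_Icc, Finset.mem_Ico] at *
    omega
  · intro b hb
    generalize K ^ n * N = M at *
    simp only [gridIdx, Finset.mem_product, Finset.mem_Icc, Finset.mem_Ico] at *
    omega
  · intro kl _
    ext <;> simp
  · intro b hb
    simp only [gridIdx, Finset.mem_product, Finset.mem_Ico] at hb
    ext <;> simp <;> omega
  · intro kl hkl
    rw [Dn_eq_column, if_pos (column_subset_sq (by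
      generalize K ^ n * N = M at *
      simp only [gridIdx, Finset.mem_product, Finset.mem_Icc, Finset.mem_Ico] at *
      omega))]

end Grid

section GridCount

variable {f : ℝ × ℝ → ℝ} {M : ℕ} {R : ℝ}

lemma isCompact_graphOn (hf : ContinuousOn f sq) : IsCompact (graphOn f sq) :=
  isCompact_sq.image_of_continuousOn (continuousOn_fst.prodMk (continuousOn_snd.prodMk hf))

lemma gridIdx_subset : gridIdx M ⊆ Finset.Icc (-1 : ℤ) M ×ˢ Finset.Icc (-1 : ℤ) M := by
  intro b hb
  simp only [gridIdx, Finset.mem_product, Finset.mem_Ico, Finset.mem_Icc] at hb ⊢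
  omega

lemma card_gridIdx : (gridIdx M).card = M ^ 2 := by
  simp [gridIdx, Finset.card_product, pow_two]

lemma ncard_levels_column_mem_Ioc (hf : ContinuousOn f sq) {b : ℤ × ℤ} (hb : b ∈ gridIdx M) :
    ((levels (M : ℝ)⁻¹ (f '' (sq ∩ column (M : ℝ)⁻¹ b))).ncard : ℝ) ∈
      Ioc (M * Osc f (column (M : ℝ)⁻¹ b)) (M * Osc f (column (M : ℝ)⁻¹ b) + 2) := by
  have hM : (0 : ℝ) < M := by
    have := (Finset.mem_product.1 hb).1
    rw [Finset.mem_Ico] at this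
    exact_mod_cast (show 0 < M by omega)
  have hε : (0 : ℝ) < (M : ℝ)⁻¹ := inv_pos.2 hM
  rw [inter_eq_right.2 (column_subset_sq hb)]
  have hC := isCompact_column (M : ℝ)⁻¹ b
  have hne := column_nonempty hε.le b
  have hfC := hf.mono (column_subset_sq hb)
  have hsub := image_subset_Icc_Osc hC hne hfC
  have hO := Osc_nonneg hC hne hfC
  constructor
  · have := lt_ncard_levels hε (by linarith)
      (Icc_Osc_subset_image hC (isPreconnected_column _ b) hne hfC) (finite_levels hε hsub)
    rwa [add_sub_cancel_left, div_inv_eq_mul, mul_comm] at this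
  · have := ncard_levels_le hε hO hsub
    rwa [div_inv_eq_mul, mul_comm] at this

lemma ncard_levels_column_le (hR : ∀ p ∈ sq, |f p| ≤ R) (hM : 0 < M) (b : ℤ × ℤ) :
    ((levels (M : ℝ)⁻¹ (f '' (sq ∩ column (M : ℝ)⁻¹ b))).ncard : ℝ) ≤ 2 * R * M + 2 := by
  have hR0 : 0 ≤ R := (abs_nonneg _).trans (hR _ zero_mem_sq)
  have := ncard_levels_le (ε := (M : ℝ)⁻¹) (m := -R) (L := 2 * R)
    (T := f '' (sq ∩ column (M : ℝ)⁻¹ b)) (by positivity) (by positivity) (by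
      rintro _ ⟨p, hp, rfl⟩
      have := abs_le.1 (hR p hp.1)
      constructor <;> linarith)
  rwa [div_inv_eq_mul] at this

lemma sum_gridIdx_le_Ncubes (hf : ContinuousOn f sq) (hM : 0 < M) :
    (∑ b ∈ gridIdx M, ((levels (M : ℝ)⁻¹ (f '' (sq ∩ column (M : ℝ)⁻¹ b))).ncard : ℝ))
      ≤ Ncubes (graphOn f sq) (M : ℝ)⁻¹ := by
  rw [Ncubes_graphOn_eq_sum (isCompact_graphOn hf).isBounded (by positivity) _
    (fun b => mem_Icc_of_sq_inter_column hM)]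
  push_cast
  exact Finset.sum_le_sum_of_subset_of_nonneg gridIdx_subset (fun _ _ _ => by positivity)

lemma mul_gridOsc_le_Ncubes (hf : ContinuousOn f sq) (hM : 0 < M) :
    (M : ℝ) * gridOsc f M ≤ Ncubes (graphOn f sq) (M : ℝ)⁻¹ := by
  refine le_trans ?_ (sum_gridIdx_le_Ncubes hf hM)
  rw [gridOsc, Finset.mul_sum]
  exact Finset.sum_le_sum fun b hb => (ncard_levels_column_mem_Ioc hf hb).1.le

lemma pow_two_le_Ncubes (hf : ContinuousOn f sq) (hM : 0 < M) :
    (M : ℝ) ^ 2 ≤ Ncubes (graphOn f sq) (M : ℝ)⁻¹ := by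
  refine le_trans ?_ (sum_gridIdx_le_Ncubes hf hM)
  have hcard : (M : ℝ) ^ 2 = ∑ _b ∈ gridIdx M, (1 : ℝ) := by simp [pow_two]
  rw [hcard]
  refine Finset.sum_le_sum fun b hb => ?_
  have hC := isCompact_column (M : ℝ)⁻¹ b
  have hO := Osc_nonneg hC (column_nonempty (by positivity) b) (hf.mono (column_subset_sq hb))
  have hpos := (mul_nonneg (Nat.cast_nonneg M) hO).trans_lt (ncard_levels_column_mem_Ioc hf hb).1
  exact_mod_cast Nat.one_le_iff_ne_zero.2 (Nat.cast_pos.1 hpos).ne'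

lemma Ncubes_le_mul_gridOsc_add (hf : ContinuousOn f sq) (hR : ∀ p ∈ sq, |f p| ≤ R) (hM : 0 < M) :
    (Ncubes (graphOn f sq) (M : ℝ)⁻¹ : ℝ) ≤ M * gridOsc f M + (16 * R + 18) * M ^ 2 := by
  classical
  have hR0 : 0 ≤ R := (abs_nonneg _).trans (hR _ zero_mem_sq)
  have hcard : ((Finset.Icc (-1 : ℤ) M ×ˢ Finset.Icc (-1 : ℤ) M \ gridIdx M).card : ℝ)
      = 4 * M + 4 := by
    have h := Finset.card_sdiff_add_card_eq_card (gridIdx_subset (M := M))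
    rw [card_gridIdx, Finset.card_product, Int.card_Icc,
      show ((M : ℤ) + 1 - -1).toNat = M + 2 by omega] at h
    have h' : ((Finset.Icc (-1 : ℤ) M ×ˢ Finset.Icc (-1 : ℤ) M \ gridIdx M).card : ℝ) + M ^ 2
        = (M + 2) * (M + 2) := by exact_mod_cast h
    linarith
  -- The `4M + 4` columns off the grid meet `sq` only on its boundary; `2RM + 2` bounds them.
  rw [Ncubes_graphOn_eq_sum (isCompact_graphOn hf).isBounded (by positivity) _
    (fun b => mem_Icc_of_sq_inter_column hM), ← Finset.sum_sdiff gridIdx_subset]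
  push_cast
  have hout := Finset.sum_le_sum fun b
    (_ : b ∈ Finset.Icc (-1 : ℤ) M ×ˢ Finset.Icc (-1 : ℤ) M \ gridIdx M) =>
    ncard_levels_column_le hR hM b
  have hin := Finset.sum_le_sum fun b (hb : b ∈ gridIdx M) =>
    (ncard_levels_column_mem_Ioc hf hb).2
  rw [Finset.sum_const, nsmul_eq_mul, hcard] at hout
  rw [Finset.sum_add_distrib, ← Finset.mul_sum, ← gridOsc, Finset.sum_const, nsmul_eq_mul] at hin
  have hM1 : (1 : ℝ) ≤ M := by exact_mod_cast hM
  rw [card_gridIdx] at hin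
  push_cast at hin
  have hboundary : (4 * M + 4) * (2 * R * M + 2) ≤ (16 * R + 16) * (M : ℝ) ^ 2 := by
    nlinarith [mul_nonneg (mul_nonneg hR0 (Nat.cast_nonneg M)) (sub_nonneg.2 hM1)]
  linarith

lemma gridOsc_nonneg (hf : ContinuousOn f sq) : 0 ≤ gridOsc f M :=
  Finset.sum_nonneg fun b hb => Osc_nonneg (isCompact_column _ b)
    (column_nonempty (by positivity) b) (hf.mono (column_subset_sq hb))

lemma gridOsc_le (hf : ContinuousOn f sq) (hR : ∀ p ∈ sq, |f p| ≤ R) :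
    gridOsc f M ≤ 2 * R * M ^ 2 := by
  calc gridOsc f M ≤ ∑ _b ∈ gridIdx M, 2 * R :=
        Finset.sum_le_sum fun b hb => Osc_le_two_mul (isCompact_column _ b)
          (column_nonempty (by positivity) b) (hf.mono (column_subset_sq hb))
          fun p hp => hR p (column_subset_sq hb hp)
    _ = 2 * R * M ^ 2 := by simp; ring

end GridCount

section BoxDim

variable {E : Set (ℝ × ℝ × ℝ)} {a C s t q c : ℝ}

lemma tendsto_log_one_div : Tendsto (fun ε : ℝ => Real.log (1 / ε)) (𝓝[>] 0) atTop := by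
  simpa only [one_div, Function.comp_def] using
    Real.tendsto_log_atTop.comp tendsto_inv_nhdsGT_zero

lemma tendsto_add_div_log_one_div (s C : ℝ) :
    Tendsto (fun ε : ℝ => s + C / Real.log (1 / ε)) (𝓝[>] 0) (𝓝 s) := by
  simpa using tendsto_const_nhds.add (tendsto_const_nhds.div_atTop tendsto_log_one_div)

lemma add_div_mul_eq {L : ℝ} (hL : L ≠ 0) : (s + C / L) * L = s * L + C := by
  rw [add_mul, div_mul_cancel₀ _ hL]

lemma log_mul_rpow_one_div {ε : ℝ} (ha : 0 < a) (hε : 0 < ε) :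
    Real.log (a * (1 / ε) ^ s) = Real.log a + s * Real.log (1 / ε) := by
  rw [Real.log_mul ha.ne' (Real.rpow_pos_of_pos (one_div_pos.2 hε) s).ne',
    Real.log_rpow (one_div_pos.2 hε)]

lemma eventually_le_boxRatio (ha : 0 < a)
    (h : ∀ᶠ ε in 𝓝[>] 0, a * (1 / ε) ^ s ≤ Ncubes E ε) (ht : t < s) :
    ∀ᶠ ε in 𝓝[>] 0, t ≤ boxRatio E ε := by
  filter_upwards [h, tendsto_log_one_div.eventually_gt_atTop 0,
    (tendsto_add_div_log_one_div s (Real.log a)).eventually (lt_mem_nhds ht),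
    self_mem_nhdsWithin] with ε hN hL hts hε
  have hlog : Real.log a + s * Real.log (1 / ε) ≤ Real.log (Ncubes E ε) := by
    rw [← log_mul_rpow_one_div ha hε]
    exact Real.log_le_log (mul_pos ha (Real.rpow_pos_of_pos (one_div_pos.2 hε) s)) hN
  have := mul_lt_mul_of_pos_right hts hL
  rw [add_div_mul_eq hL.ne'] at this
  rw [boxRatio, le_div_iff₀ hL]
  linarith

lemma eventually_boxRatio_le (hs : 0 ≤ s) (hC : 0 < C)
    (h : ∀ᶠ ε in 𝓝[>] 0, (Ncubes E ε : ℝ) ≤ C * (1 / ε) ^ s) (ht : s < t) :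
    ∀ᶠ ε in 𝓝[>] 0, boxRatio E ε ≤ t := by
  filter_upwards [h, tendsto_log_one_div.eventually_gt_atTop 0,
    (tendsto_add_div_log_one_div s (Real.log C)).eventually (gt_mem_nhds ht),
    self_mem_nhdsWithin] with ε hN hL hts hε
  rw [boxRatio, div_le_iff₀ hL]
  rcases (Ncubes E ε).eq_zero_or_pos with h0 | h0
  · rw [h0, Nat.cast_zero, Real.log_zero]; nlinarith
  · have hlog : Real.log (Ncubes E ε) ≤ Real.log C + s * Real.log (1 / ε) := by
      rw [← log_mul_rpow_one_div hC hε]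
      exact Real.log_le_log (by exact_mod_cast h0) hN
    have := mul_lt_mul_of_pos_right hts hL
    rw [add_div_mul_eq hL.ne'] at this
    linarith

lemma boxRatio_nonneg {ε : ℝ} (hε : ε ∈ Ioo 0 1) : 0 ≤ boxRatio E ε :=
  div_nonneg (Real.log_natCast_nonneg _)
    (Real.log_nonneg (by rw [le_div_iff₀ hε.1]; linarith [hε.2]))

lemma upperBoxDim_le (hs : 0 ≤ s) (hC : 0 < C)
    (h : ∀ᶠ ε in 𝓝[>] 0, (Ncubes E ε : ℝ) ≤ C * (1 / ε) ^ s) : upperBoxDim E ≤ s :=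
  le_of_forall_gt_imp_ge_of_dense fun _ ht =>
    limsup_le_of_le
      (isBoundedUnder_of_eventually_ge (mem_of_superset (Ioo_mem_nhdsGT one_pos)
        fun _ => boxRatio_nonneg)).isCoboundedUnder_le
      (eventually_boxRatio_le hs hC h ht)

lemma isBoundedUnder_boxRatio (hs : 0 ≤ s) (hC : 0 < C)
    (h : ∀ᶠ ε in 𝓝[>] 0, (Ncubes E ε : ℝ) ≤ C * (1 / ε) ^ s) :
    IsBoundedUnder (· ≤ ·) (𝓝[>] 0) (boxRatio E) :=
  isBoundedUnder_of_eventually_le (eventually_boxRatio_le hs hC h (lt_add_one s))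

lemma le_lowerBoxDim (hbdd : IsBoundedUnder (· ≤ ·) (𝓝[>] 0) (boxRatio E)) (ha : 0 < a)
    (h : ∀ᶠ ε in 𝓝[>] 0, a * (1 / ε) ^ s ≤ Ncubes E ε) : s ≤ lowerBoxDim E :=
  le_of_forall_lt_imp_le_of_dense fun _ ht =>
    le_liminf_of_le hbdd.isCoboundedUnder_ge (eventually_le_boxRatio ha h ht)

lemma eventually_exists_scale (hq : 1 < q) (hc : 0 < c) (n₀ : ℕ) :
    ∀ᶠ ε in 𝓝[>] 0, ∃ n ≥ n₀, q ^ n * c ≤ 1 / ε ∧ 1 / ε < q ^ (n + 1) * c := by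
  have hr : 0 < (q ^ n₀ * c)⁻¹ := by positivity
  filter_upwards [Ioo_mem_nhdsGT hr] with ε ⟨hε, hεr⟩
  have hx : q ^ n₀ ≤ 1 / ε / c := by
    rw [le_div_iff₀ hc, one_div, le_inv_comm₀ (by positivity) hε]
    exact hεr.le
  obtain ⟨n, hn1, hn2⟩ := exists_nat_pow_near ((one_le_pow₀ hq.le).trans hx) hq
  refine ⟨n, ?_, (le_div_iff₀ hc).1 hn1, (div_lt_iff₀ hc).1 hn2⟩
  by_contra! hlt
  exact (hx.trans_lt hn2).not_ge (pow_le_pow_right₀ hq.le hlt)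

end BoxDim

section Scales

variable {E : Set (ℝ × ℝ × ℝ)} {a C s q c : ℝ}

lemma eventually_le_Ncubes_of_seq (hE : Bornology.IsBounded E) (hq : 1 < q) (hc : 0 < c)
    (hs : 0 ≤ s) (ha : 0 ≤ a)
    (h : ∀ᶠ n : ℕ in atTop, a * (q ^ n * c) ^ s ≤ Ncubes E (q ^ n * c)⁻¹) :
    ∀ᶠ ε in 𝓝[>] 0, a / (27 * q ^ s) * (1 / ε) ^ s ≤ Ncubes E ε := by
  obtain ⟨n₀, hn₀⟩ := eventually_atTop.1 h
  filter_upwards [eventually_exists_scale hq hc n₀, self_mem_nhdsWithin] with ε ⟨n, hn, hlo, hhi⟩ hε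
  replace hε : 0 < ε := hε
  have hM : 0 < q ^ n * c := by positivity
  have hscale : (Ncubes E (q ^ n * c)⁻¹ : ℝ) ≤ 27 * Ncubes E ε := by
    have hεM : ε ≤ (q ^ n * c)⁻¹ := by rw [le_inv_comm₀ hε hM, ← one_div]; exact hlo
    exact_mod_cast Ncubes_le_mul_Ncubes hE hε hεM
  have hpow : (1 / ε) ^ s ≤ q ^ s * (q ^ n * c) ^ s := by
    rw [← Real.mul_rpow (by positivity) hM.le]
    exact Real.rpow_le_rpow (by positivity) (by rw [pow_succ] at hhi; linarith) hs
  calc a / (27 * q ^ s) * (1 / ε) ^ s ≤ a / (27 * q ^ s) * (q ^ s * (q ^ n * c) ^ s) := by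
        gcongr
    _ = a * (q ^ n * c) ^ s / 27 := by
        field_simp
    _ ≤ Ncubes E (q ^ n * c)⁻¹ / 27 := by gcongr; exact hn₀ n hn
    _ ≤ Ncubes E ε := by linarith

lemma eventually_Ncubes_le_of_seq (hE : Bornology.IsBounded E) (hq : 1 < q) (hc : 0 < c)
    (hs : 0 ≤ s) (hC : 0 ≤ C)
    (h : ∀ᶠ n : ℕ in atTop, (Ncubes E (q ^ n * c)⁻¹ : ℝ) ≤ C * (q ^ n * c) ^ s) :
    ∀ᶠ ε in 𝓝[>] 0, (Ncubes E ε : ℝ) ≤ 27 * C * q ^ s * (1 / ε) ^ s := by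
  obtain ⟨n₀, hn₀⟩ := eventually_atTop.1 h
  filter_upwards [eventually_exists_scale hq hc n₀, self_mem_nhdsWithin] with ε ⟨n, hn, hlo, hhi⟩ hε
  replace hε : 0 < ε := hε
  have hM : 0 < q ^ (n + 1) * c := by positivity
  have hscale : (Ncubes E ε : ℝ) ≤ 27 * Ncubes E (q ^ (n + 1) * c)⁻¹ := by
    have hMε : (q ^ (n + 1) * c)⁻¹ ≤ ε := by rw [inv_le_comm₀ hM hε, ← one_div]; exact hhi.le
    exact_mod_cast Ncubes_le_mul_Ncubes hE (inv_pos.2 hM) hMε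
  have hpow : (q ^ (n + 1) * c) ^ s ≤ q ^ s * (1 / ε) ^ s := by
    rw [← Real.mul_rpow (by positivity) (by positivity)]
    refine Real.rpow_le_rpow hM.le ?_ hs
    rw [pow_succ, mul_comm _ q, mul_assoc]
    exact mul_le_mul_of_nonneg_left hlo (by positivity)
  calc (Ncubes E ε : ℝ) ≤ 27 * Ncubes E (q ^ (n + 1) * c)⁻¹ := hscale
    _ ≤ 27 * (C * (q ^ (n + 1) * c) ^ s) := by gcongr; exact hn₀ _ (by omega)
    _ ≤ 27 * (C * (q ^ s * (1 / ε) ^ s)) := by gcongr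
    _ = 27 * C * q ^ s * (1 / ε) ^ s := by ring

end Scales

section Graph

variable {f : ℝ × ℝ → ℝ} {N K n : ℕ} {R : ℝ}

lemma Ncubes_le_mul_pow_three (hf : ContinuousOn f sq) (hR : ∀ p ∈ sq, |f p| ≤ R) {M : ℕ}
    (hM : 0 < M) : (Ncubes (graphOn f sq) (M : ℝ)⁻¹ : ℝ) ≤ (18 * R + 18) * (M : ℝ) ^ 3 := by
  have hR0 : 0 ≤ R := (abs_nonneg _).trans (hR _ zero_mem_sq)
  have hM1 : (1 : ℝ) ≤ M := by exact_mod_cast hM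
  have h1 := Ncubes_le_mul_gridOsc_add hf hR hM
  have h2 := mul_le_mul_of_nonneg_left (gridOsc_le (M := M) hf hR) (Nat.cast_nonneg M)
  have h3 : (M : ℝ) ^ 2 ≤ (M : ℝ) ^ 3 := pow_le_pow_right₀ hM1 (by norm_num)
  nlinarith

lemma isBoundedUnder_boxRatio_graphOn (hf : ContinuousOn f sq) :
    IsBoundedUnder (· ≤ ·) (𝓝[>] 0) (boxRatio (graphOn f sq)) := by
  obtain ⟨R, hR⟩ : ∃ R, ∀ p ∈ sq, |f p| ≤ R := isCompact_sq.exists_bound_of_continuousOn hf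
  have hR0 : 0 ≤ R := (abs_nonneg _).trans (hR _ zero_mem_sq)
  refine isBoundedUnder_boxRatio (s := 3) (C := 27 * (18 * R + 18) * 2 ^ (3 : ℝ)) (by norm_num)
    (by positivity) (eventually_Ncubes_le_of_seq (isCompact_graphOn hf).isBounded one_lt_two
      one_pos (by norm_num) (by positivity) (Eventually.of_forall fun n => ?_))
  simpa using Ncubes_le_mul_pow_three hf hR (M := 2 ^ n) (by positivity)

lemma two_le_lowerBoxDim_graphOn (hf : ContinuousOn f sq) : 2 ≤ lowerBoxDim (graphOn f sq) :=
  le_lowerBoxDim (isBoundedUnder_boxRatio_graphOn hf) (a := 1 / (27 * 2 ^ (2 : ℝ)))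
    (by positivity) (eventually_le_Ncubes_of_seq (isCompact_graphOn hf).isBounded one_lt_two
      one_pos (by norm_num) zero_le_one (Eventually.of_forall fun n => by
        simpa using pow_two_le_Ncubes hf (M := 2 ^ n) (by positivity)))

lemma OscSum_sq_nonneg (hf : ContinuousOn f sq) : 0 ≤ OscSum f N K n sq := by
  rw [OscSum_sq_eq_gridOsc]; exact gridOsc_nonneg hf

lemma OscSum_sq_le (hf : ContinuousOn f sq) (hR : ∀ p ∈ sq, |f p| ≤ R) :
    OscSum f N K n sq ≤ 2 * R * ((K : ℝ) ^ n * N) ^ 2 := by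
  have := gridOsc_le (M := K ^ n * N) hf hR
  rw [← OscSum_sq_eq_gridOsc] at this
  push_cast at this
  exact this

lemma mul_OscSum_le_Ncubes (hf : ContinuousOn f sq) (hN : 1 ≤ N) (hK : 1 ≤ K) :
    (K : ℝ) ^ n * N * OscSum f N K n sq ≤ Ncubes (graphOn f sq) ((K : ℝ) ^ n * N)⁻¹ := by
  have := mul_gridOsc_le_Ncubes hf (M := K ^ n * N) (Nat.mul_pos (by positivity) hN)
  rw [← OscSum_sq_eq_gridOsc] at this
  push_cast at this
  exact this

lemma Ncubes_le_mul_OscSum_add (hf : ContinuousOn f sq) (hR : ∀ p ∈ sq, |f p| ≤ R) (hN : 1 ≤ N)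
    (hK : 1 ≤ K) : (Ncubes (graphOn f sq) ((K : ℝ) ^ n * N)⁻¹ : ℝ)
      ≤ (16 * R + 19) * ((K : ℝ) ^ n * N * (OscSum f N K n sq + 2 * (K : ℝ) ^ n * N)) := by
  have hR0 : 0 ≤ R := (abs_nonneg _).trans (hR _ zero_mem_sq)
  have hcount := Ncubes_le_mul_gridOsc_add hf hR (M := K ^ n * N) (Nat.mul_pos (by positivity) hN)
  rw [← OscSum_sq_eq_gridOsc] at hcount
  push_cast at hcount
  have hMO := mul_nonneg (by positivity : (0 : ℝ) ≤ (K : ℝ) ^ n * N) (OscSum_sq_nonneg hf (N := N) (K := K) (n := n))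
  nlinarith [mul_nonneg hR0 hMO]

lemma rpow_le_of_le_log_div {x b M : ℝ} (hM : 1 < M) (hx : 0 ≤ x) (hb : 0 < b)
    (h : b ≤ Real.log x / Real.log M) : M ^ b ≤ x := by
  have hL := Real.log_pos hM
  have h1 : b * Real.log M ≤ Real.log x := (le_div_iff₀ hL).1 h
  rcases hx.eq_or_lt with rfl | hx
  · rw [Real.log_zero] at h1
    exact absurd h1 (not_le.2 (mul_pos hb hL))
  · exact (Real.rpow_le_iff_le_log (by linarith) hx).2 h1

lemma le_rpow_of_log_div_le {x a M : ℝ} (hM : 1 < M) (hx : 0 < x)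
    (h : Real.log x / Real.log M ≤ a) : x ≤ M ^ a :=
  (Real.le_rpow_iff_log_le hx (by linarith)).2 ((div_le_iff₀ (Real.log_pos hM)).1 h)

lemma one_add_le_lowerBoxDim_graphOn (hf : ContinuousOn f sq) (hN : 1 ≤ N) (hK : 2 ≤ K)
    {b : ℝ} (hb0 : 0 < b)
    (hb : ∀ᶠ n : ℕ in atTop, b ≤ Real.log (OscSum f N K n sq) / ((n : ℝ) * Real.log K)) :
    1 + b ≤ lowerBoxDim (graphOn f sq) := by
  have hq : (1 : ℝ) < K := by exact_mod_cast hK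
  have hc : (0 : ℝ) < N := by exact_mod_cast hN
  refine le_lowerBoxDim (isBoundedUnder_boxRatio_graphOn hf)
    (a := ((N : ℝ) ^ b)⁻¹ / (27 * (K : ℝ) ^ (1 + b))) (by positivity)
    (eventually_le_Ncubes_of_seq (isCompact_graphOn hf).isBounded hq hc (by positivity)
      (by positivity) ?_)
  filter_upwards [hb, eventually_ge_atTop 1] with n hn hn1
  rw [← Real.log_pow] at hn
  have hO := rpow_le_of_le_log_div (one_lt_pow₀ hq (by omega)) (OscSum_sq_nonneg hf) hb0 hn
  calc ((N : ℝ) ^ b)⁻¹ * ((K : ℝ) ^ n * N) ^ (1 + b) = (K : ℝ) ^ n * N * ((K : ℝ) ^ n) ^ b := by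
        rw [Real.rpow_one_add' (by positivity) (by linarith),
          Real.mul_rpow (by positivity) hc.le]
        field_simp
    _ ≤ (K : ℝ) ^ n * N * OscSum f N K n sq := by gcongr
    _ ≤ _ := mul_OscSum_le_Ncubes hf hN (by omega)

lemma upperBoxDim_graphOn_le_one_add (hf : ContinuousOn f sq) (hN : 1 ≤ N) (hK : 2 ≤ K)
    {a : ℝ} (ha : ∀ᶠ n : ℕ in atTop, Real.log (OscSum f N K n sq + 2 * (K : ℝ) ^ n * N)
      / ((n : ℝ) * Real.log K) ≤ a) :
    upperBoxDim (graphOn f sq) ≤ 1 + a := by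
  obtain ⟨R, hR⟩ : ∃ R, ∀ p ∈ sq, |f p| ≤ R := isCompact_sq.exists_bound_of_continuousOn hf
  have hR0 : 0 ≤ R := (abs_nonneg _).trans (hR _ zero_mem_sq)
  have hq : (1 : ℝ) < K := by exact_mod_cast hK
  have hc : (1 : ℝ) ≤ N := by exact_mod_cast hN
  have hx : ∀ n : ℕ, 1 < OscSum f N K n sq + 2 * (K : ℝ) ^ n * N := fun n => by
    nlinarith [OscSum_sq_nonneg hf (N := N) (K := K) (n := n), one_le_pow₀ (n := n) hq.le]
  have ha0 : 0 ≤ a := by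
    obtain ⟨n, hn, hn1⟩ := (ha.and (eventually_ge_atTop 1)).exists
    have hn1' : (1 : ℝ) ≤ n := by exact_mod_cast hn1
    exact (div_pos (Real.log_pos (hx n)) (by nlinarith [Real.log_pos hq])).le.trans hn
  refine upperBoxDim_le (s := 1 + a) (by linarith) (C := 27 * (16 * R + 19) * (K : ℝ) ^ (1 + a))
    (by positivity) (eventually_Ncubes_le_of_seq (c := N) (s := 1 + a) (C := 16 * R + 19)
      (isCompact_graphOn hf).isBounded hq (by linarith) (by linarith) (by positivity) ?_)
  filter_upwards [ha, eventually_ge_atTop 1] with n hn hn1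
  rw [← Real.log_pow] at hn
  have hM : (0 : ℝ) ≤ (K : ℝ) ^ n * N := by positivity
  have hxM : OscSum f N K n sq + 2 * (K : ℝ) ^ n * N ≤ ((K : ℝ) ^ n * N) ^ a :=
    (le_rpow_of_log_div_le (one_lt_pow₀ hq (by omega)) (by linarith [hx n]) hn).trans
      (Real.rpow_le_rpow (by positivity) (le_mul_of_one_le_right (by positivity) hc) ha0)
  calc (Ncubes (graphOn f sq) ((K : ℝ) ^ n * N)⁻¹ : ℝ)
      ≤ (16 * R + 19) * ((K : ℝ) ^ n * N * (OscSum f N K n sq + 2 * (K : ℝ) ^ n * N)) :=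
        Ncubes_le_mul_OscSum_add hf hR hN (by omega)
    _ ≤ (16 * R + 19) * ((K : ℝ) ^ n * N * ((K : ℝ) ^ n * N) ^ a) := by gcongr
    _ = (16 * R + 19) * ((K : ℝ) ^ n * N) ^ (1 + a) := by
        rw [Real.rpow_one_add' hM (by linarith)]

lemma log_div_log_pow_le {x D q : ℝ} (hq : 1 < q) (hn : 1 ≤ n) (hx : 0 < x) (hD : 1 ≤ D)
    (h : x ≤ D * (q ^ n) ^ 2) :
    Real.log x / ((n : ℝ) * Real.log q) ≤ 2 + Real.log D / Real.log q := by
  have hL := Real.log_pos hq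
  have hn' : (1 : ℝ) ≤ n := by exact_mod_cast hn
  have hlog : Real.log x ≤ Real.log D + 2 * (n * Real.log q) := by
    calc Real.log x ≤ Real.log (D * (q ^ n) ^ 2) := Real.log_le_log hx h
      _ = Real.log D + 2 * (n * Real.log q) := by
        rw [Real.log_mul (by positivity) (by positivity), Real.log_pow, Real.log_pow]
        push_cast; ring
  have hD' : Real.log D ≤ n * Real.log D := le_mul_of_one_le_left (Real.log_nonneg hD) hn'
  have e : (2 + Real.log D / Real.log q) * (n * Real.log q)
      = 2 * (n * Real.log q) + n * Real.log D := by
    field_simp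
  rw [div_le_iff₀ (by positivity)]
  linarith

lemma exists_eventually_log_div_le (hf : ContinuousOn f sq) (hN : 1 ≤ N) (hK : 2 ≤ K) :
    ∃ a, ∀ᶠ n : ℕ in atTop, Real.log (OscSum f N K n sq + 2 * (K : ℝ) ^ n * N)
      / ((n : ℝ) * Real.log K) ≤ a := by
  obtain ⟨R, hR⟩ : ∃ R, ∀ p ∈ sq, |f p| ≤ R := isCompact_sq.exists_bound_of_continuousOn hf
  have hR0 : 0 ≤ R := (abs_nonneg _).trans (hR _ zero_mem_sq)
  have hq : (1 : ℝ) < K := by exact_mod_cast hK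
  have hc : (1 : ℝ) ≤ N := by exact_mod_cast hN
  refine ⟨_, (eventually_ge_atTop 1).mono fun n hn => log_div_log_pow_le
    (D := (2 * R + 2) * N ^ 2) hq hn ?_ (by nlinarith) ?_⟩
  · have := OscSum_sq_nonneg hf (N := N) (K := K) (n := n)
    positivity
  · have hM1 : (1 : ℝ) ≤ (K : ℝ) ^ n * N := one_le_mul_of_one_le_of_one_le (one_le_pow₀ hq.le) hc
    have hMM : (K : ℝ) ^ n * N ≤ ((K : ℝ) ^ n * N) ^ 2 := by nlinarith
    nlinarith [OscSum_sq_le (N := N) (K := K) (n := n) hf hR]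

theorem le_lowerBoxDim_graphOn (hf : ContinuousOn f sq) (hN : 1 ≤ N) (hK : 2 ≤ K) :
    max 2 (1 + liminf
        (fun n : ℕ => Real.log (OscSum f N K n sq) / ((n : ℝ) * Real.log (K : ℝ))) atTop)
      ≤ lowerBoxDim (graphOn f sq) := by
  have h2 := two_le_lowerBoxDim_graphOn hf
  refine max_le h2 ?_
  -- The set of eventual lower bounds may be empty or unbounded (junk `liminf = 0`);
  -- `Real.sSup_le` needs neither, only `0 ≤ lowerBoxDim - 1`.
  rw [liminf_eq, ← le_sub_iff_add_le']
  refine Real.sSup_le (fun b hb => ?_) (by linarith)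
  rw [le_sub_iff_add_le']
  rcases le_or_gt b 1 with hb1 | hb1
  · linarith
  · exact one_add_le_lowerBoxDim_graphOn hf hN hK (by linarith) hb

theorem upperBoxDim_graphOn_le (hf : ContinuousOn f sq) (hN : 1 ≤ N) (hK : 2 ≤ K) :
    upperBoxDim (graphOn f sq)
      ≤ 1 + limsup
        (fun n : ℕ => Real.log (OscSum f N K n sq + 2 * (K : ℝ) ^ n * (N : ℝ))
          / ((n : ℝ) * Real.log (K : ℝ))) atTop := by
  rw [limsup_eq, ← sub_le_iff_le_add']
  exact le_csInf (exists_eventually_log_div_le hf hN hK)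
    fun a ha => sub_le_iff_le_add'.2 (upperBoxDim_graphOn_le_one_add hf hN hK ha)

end Graph

end RFIS

open RFIS Filter in
/-- **Lemma 4.1.**  For the bilinear RFIF `f`,
`lower box dim (Γ f) ≥ max {2, 1 + liminf_n log O(f,n) / (n log K)}` and
`upper box dim (Γ f) ≤ 1 + limsup_n log (O(f,n) + 2 Kⁿ N) / (n log K)`. -/
theorem boxDim_bounds_of_oscillation (st : Setup) :
    max 2 (1 + liminf
        (fun n : ℕ => Real.log (OscSum st.f st.N st.K n sq) / ((n : ℝ) * Real.log (st.K : ℝ)))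
        atTop)
      ≤ lowerBoxDim (graphOn st.f sq) ∧
    upperBoxDim (graphOn st.f sq)
      ≤ 1 + limsup
        (fun n : ℕ =>
          Real.log (OscSum st.f st.N st.K n sq + 2 * (st.K : ℝ) ^ n * (st.N : ℝ))
            / ((n : ℝ) * Real.log (st.K : ℝ)))
        atTop := by
  have hN : 1 ≤ st.N := one_le_two.trans st.hN
  exact ⟨le_lowerBoxDim_graphOn st.hfcont hN st.hK, upperBoxDim_graphOn_le st.hfcont hN st.hK⟩
end
end
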